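/- arXiv:1511.00528 — 8 statements merged into one kernel-verified Lean document; each statement's English description precedes it below -/
import Mathlib

section
/- Let (s_t)_{t>0} be kernels satisfying the size condition with exponents m, α > 0. Let Q ⊂ ℝ^n be a cube, G ⊂ Q, and let ν be a finite positive Borel measure with ν(Q) ≤ A ℓ(Q)^m. If there is C₀ such that ‖1_G V_{ν,Q} f‖_{L²(ν)} ≤ C₀ ‖f‖_{L²(ν)} for every f ∈ L²(ν) with supp f ⊂ G, then ‖1_G V_ν f‖_{L²(ν)} ≤ C ‖f‖_{L²(ν)} for every f ∈ L²(ν) with supp f ⊂ G, where C depends only on C₀, A, m and the kernel size constant. -/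
open MeasureTheory Metric Set
open scoped ENNReal NNReal

noncomputable section

abbrev Rn (n : ℕ) : Type := EuclideanSpace ℝ (Fin n)

structure Cube (n : ℕ) : Type where
  c : Rn n
  l : ℝ
  l_pos : 0 < l

namespace Cube

variable {n : ℕ}

/-- The (half-open) cube as a subset of `ℝⁿ`. -/
def set (Q : Cube n) : Set (Rn n) :=
  {x | ∀ i, Q.c i - Q.l / 2 ≤ x i ∧ x i < Q.c i + Q.l / 2}

/-- The concentric dilated cube `λQ` as a set. -/
def dilatedSet (Q : Cube n) (lam : ℝ) : Set (Rn n) :=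
  {x | ∀ i, Q.c i - lam * Q.l / 2 ≤ x i ∧ x i < Q.c i + lam * Q.l / 2}

/-- The distance `d(P,R)` between two cubes. -/
def dist (P R : Cube n) : ℝ :=
  sInf (Set.image2 (fun x y => Dist.dist x y) P.set R.set)

/-- The long distance `D(P,R) = ℓ(P) + ℓ(R) + d(P,R)`. -/
def longDist (P R : Cube n) : ℝ := P.l + R.l + Cube.dist P R

end Cube

/-- Size condition for the kernels `s_t`. -/
def SizeCond (n : ℕ) (m α Cs : ℝ) (s : ℝ → Rn n → Rn n → ℂ) : Prop :=
  ∀ t : ℝ, 0 < t → ∀ x y : Rn n,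
    ‖s t x y‖ ≤ Cs * t ^ α / (t + Dist.dist x y) ^ (m + α)

/-- Hölder condition in the `y`-variable. -/
def HolderY (n : ℕ) (m α Cs : ℝ) (s : ℝ → Rn n → Rn n → ℂ) : Prop :=
  ∀ t : ℝ, 0 < t → ∀ x y z : Rn n, Dist.dist y z < t / 2 →
    ‖s t x y - s t x z‖ ≤ Cs * Dist.dist y z ^ α / (t + Dist.dist x y) ^ (m + α)

/-- Hölder condition in the `x`-variable. -/
def HolderX (n : ℕ) (m α Cs : ℝ) (s : ℝ → Rn n → Rn n → ℂ) : Prop :=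
  ∀ t : ℝ, 0 < t → ∀ x y z : Rn n, Dist.dist x z < t / 2 →
    ‖s t x y - s t z y‖ ≤ Cs * Dist.dist x z ^ α / (t + Dist.dist x y) ^ (m + α)

/-- `θ_t(g dσ)(x) = ∫ s_t(x,y) g(y) dσ(y)`. -/
def theta {n : ℕ} (s : ℝ → Rn n → Rn n → ℂ) (σ : Measure (Rn n)) (g : Rn n → ℂ)
    (t : ℝ) (x : Rn n) : ℂ :=
  ∫ y, s t x y * g y ∂σ

/-- `∫_I |θ_t(g dσ)(x)|² dt/t`, the square of the vertical square function with
`t` restricted to `I` (the full square function corresponds to `I = (0,∞)`, the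
truncation `V_Q` to `I = (0, ℓ(Q))`). -/
def sqV {n : ℕ} (s : ℝ → Rn n → Rn n → ℂ) (σ : Measure (Rn n)) (g : Rn n → ℂ)
    (I : Set ℝ) (x : Rn n) : ℝ≥0∞ :=
  ∫⁻ t in I, (‖theta s σ g t x‖₊ : ℝ≥0∞) ^ 2 / ENNReal.ofReal t

/-! Split `∫₀^∞ dt/t` at `t = ℓ(Q)`. For `t ≥ ℓ(Q)` the size condition gives
`|θ_t f(x)| ≤ C t^{-m} ‖f‖_{L¹(ν)}`, so the tail of `V_ν f(x)²` is at most
`C² ℓ(Q)^{-2m} / (2m) · ‖f‖₁²`, uniformly in `x` (which sidesteps any measurability of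
`x ↦ V_ν f(x)`). Integrating over `G` and using Cauchy–Schwarz `‖f‖₁² ≤ ν(G) ‖f‖₂²` together
with `ν(G) ≤ A ℓ(Q)^m`, the factor `ℓ(Q)^{-2m}` cancels and the tail contributes at most
`(C A)² / (2m) · ‖f‖₂²`. -/

section KernelBounds

variable {n : ℕ} {m α Cs : ℝ} {s : ℝ → Rn n → Rn n → ℂ}

theorem SizeCond.norm_le_rpow_neg (hs : SizeCond n m α Cs s) (hCs : 0 ≤ Cs)
    (hmα : 0 ≤ m + α) {t : ℝ} (ht : 0 < t) (x y : Rn n) : ‖s t x y‖ ≤ Cs * t ^ (-m) :=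
  calc ‖s t x y‖ ≤ Cs * t ^ α / (t + Dist.dist x y) ^ (m + α) := hs t ht x y
    _ ≤ Cs * t ^ α / t ^ (m + α) := by
        gcongr
        exact le_add_of_nonneg_right dist_nonneg
    _ = Cs * t ^ (-m) := by
        rw [mul_div_assoc, ← Real.rpow_sub ht, show α - (m + α) = -m by ring]

theorem SizeCond.enorm_theta_le (hs : SizeCond n m α Cs s) (hCs : 0 ≤ Cs)
    (hmα : 0 ≤ m + α) (σ : Measure (Rn n)) (g : Rn n → ℂ) {t : ℝ} (ht : 0 < t) (x : Rn n) :
    ‖theta s σ g t x‖ₑ ≤ ENNReal.ofReal (t ^ (-m)) * (ENNReal.ofReal Cs * ∫⁻ y, ‖g y‖ₑ ∂σ) :=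
  calc ‖theta s σ g t x‖ₑ ≤ ∫⁻ y, ‖s t x y‖ₑ * ‖g y‖ₑ ∂σ := by
        simpa only [theta, enorm_mul] using
          enorm_integral_le_lintegral_enorm (fun y => s t x y * g y)
    _ ≤ ∫⁻ y, ENNReal.ofReal (Cs * t ^ (-m)) * ‖g y‖ₑ ∂σ := by
        gcongr with y
        rw [← ofReal_norm]
        exact ENNReal.ofReal_le_ofReal (hs.norm_le_rpow_neg hCs hmα ht x y)
    _ = _ := by
        rw [lintegral_const_mul' _ _ ENNReal.ofReal_ne_top, ENNReal.ofReal_mul hCs]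
        ring

end KernelBounds

theorem lintegral_Ici_ofReal_rpow_of_lt {a : ℝ} (ha : a < -1) {c : ℝ} (hc : 0 < c) :
    ∫⁻ t in Ici c, ENNReal.ofReal (t ^ a) = ENNReal.ofReal (-c ^ (a + 1) / (a + 1)) := by
  rw [← setLIntegral_congr Ioi_ae_eq_Ici, ← integral_Ioi_rpow_of_lt ha hc]
  refine (ofReal_integral_eq_lintegral_ofReal (integrableOn_Ioi_rpow_of_lt ha hc) ?_).symm
  filter_upwards [ae_restrict_mem measurableSet_Ioi] with t ht
  exact Real.rpow_nonneg (hc.trans ht).le a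

section SquareFunction

variable {n : ℕ} (s : ℝ → Rn n → Rn n → ℂ) (σ : Measure (Rn n)) (g : Rn n → ℂ)

theorem sqV_union {I J : Set ℝ} (hJ : MeasurableSet J) (hIJ : Disjoint I J) (x : Rn n) :
    sqV s σ g (I ∪ J) x = sqV s σ g I x + sqV s σ g J x :=
  lintegral_union hJ hIJ

theorem sqV_Ioi_zero {l : ℝ} (hl : 0 < l) (x : Rn n) :
    sqV s σ g (Ioi 0) x = sqV s σ g (Ioo 0 l) x + sqV s σ g (Ici l) x := by
  rw [← Ioo_union_Ici_eq_Ioi hl, sqV_union s σ g measurableSet_Ici]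
  exact Set.disjoint_left.2 fun t ht ht' => (not_lt.2 ht') ht.2

theorem sqV_Ici_le_of_enorm_theta_le {m l : ℝ} {B : ℝ≥0∞} {x : Rn n} (hm : 0 < m) (hl : 0 < l)
    (hθ : ∀ t, l ≤ t → ‖theta s σ g t x‖ₑ ≤ ENNReal.ofReal (t ^ (-m)) * B) :
    sqV s σ g (Ici l) x ≤ ENNReal.ofReal (l ^ (-(2 * m)) / (2 * m)) * B ^ 2 :=
  calc sqV s σ g (Ici l) x
      ≤ ∫⁻ t in Ici l, ENNReal.ofReal (t ^ (-(2 * m) - 1)) * B ^ 2 := by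
        refine setLIntegral_mono' measurableSet_Ici fun t (ht : l ≤ t) => ?_
        have ht0 : 0 < t := hl.trans_le ht
        calc (‖theta s σ g t x‖₊ : ℝ≥0∞) ^ 2 / ENNReal.ofReal t
            ≤ (ENNReal.ofReal (t ^ (-m)) * B) ^ 2 / ENNReal.ofReal t := by
              gcongr
              exact hθ t ht
          _ = ENNReal.ofReal ((t ^ (-m)) ^ 2 / t) * B ^ 2 := by
              rw [ENNReal.ofReal_div_of_pos ht0, ENNReal.ofReal_pow (by positivity), mul_pow,
                div_eq_mul_inv, div_eq_mul_inv]
              ring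
          _ = ENNReal.ofReal (t ^ (-(2 * m) - 1)) * B ^ 2 := by
              rw [← Real.rpow_natCast, ← Real.rpow_mul ht0.le, Real.rpow_sub ht0,
                Real.rpow_one]
              norm_num [mul_comm]
    _ = ENNReal.ofReal (l ^ (-(2 * m)) / (2 * m)) * B ^ 2 := by
        rw [lintegral_mul_const _ (by fun_prop),
          lintegral_Ici_ofReal_rpow_of_lt (by linarith) hl]
        congr 2
        rw [show -(2 * m) - 1 + 1 = -(2 * m) by ring, neg_div_neg_eq]

end SquareFunction

theorem sq_lintegral_enorm_le_of_support_subset {X E : Type*} [MeasurableSpace X]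
    [NormedAddCommGroup E] {μ : Measure X} {f : X → E} {G : Set X}
    (hf : AEStronglyMeasurable f μ) (hG : Function.support f ⊆ G) :
    (∫⁻ x, ‖f x‖ₑ ∂μ) ^ 2 ≤ eLpNorm f 2 μ ^ 2 * μ G := by
  have h := eLpNorm_le_eLpNorm_mul_rpow_measure_univ (one_le_two (α := ℝ≥0∞)) hf.restrict
    (μ := μ.restrict G)
  rw [eLpNorm_restrict_eq_of_support_subset hG, eLpNorm_restrict_eq_of_support_subset hG,
    eLpNorm_one_eq_lintegral_enorm, Measure.restrict_apply_univ,
    show 1 / (1 : ℝ≥0∞).toReal - 1 / (2 : ℝ≥0∞).toReal = 1 / 2 by norm_num] at h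
  calc (∫⁻ x, ‖f x‖ₑ ∂μ) ^ 2 ≤ (eLpNorm f 2 μ * μ G ^ (1 / 2 : ℝ)) ^ 2 := by gcongr
    _ = eLpNorm f 2 μ ^ 2 * μ G := by
        rw [mul_pow, ← ENNReal.rpow_natCast (μ G ^ _), ← ENNReal.rpow_mul]; norm_num

theorem eLpNorm_two_eq_rpow_lintegral {X E : Type*} [MeasurableSpace X]
    [NormedAddCommGroup E] (μ : Measure X) (f : X → E) :
    eLpNorm f 2 μ = (∫⁻ x, (‖f x‖₊ : ℝ≥0∞) ^ 2 ∂μ) ^ (1 / 2 : ℝ) := by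
  simp [eLpNorm_eq_lintegral_rpow_enorm_toReal two_ne_zero ENNReal.ofNat_ne_top, enorm_eq_nnnorm]

theorem ENNReal.rpow_half_add_sq_le (a b : ℝ≥0∞) :
    (a + b ^ 2) ^ (1 / 2 : ℝ) ≤ a ^ (1 / 2 : ℝ) + b := by
  refine (ENNReal.rpow_add_le_add_rpow _ _ (by norm_num) (by norm_num)).trans_eq ?_
  rw [← ENNReal.rpow_natCast, ← ENNReal.rpow_mul]; norm_num

section Tail

variable {n : ℕ} {m α Cs : ℝ} {s : ℝ → Rn n → Rn n → ℂ}

theorem SizeCond.sqV_Ici_le (hs : SizeCond n m α Cs s) (hCs : 0 ≤ Cs) (hm : 0 < m)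
    (hmα : 0 ≤ m + α) (σ : Measure (Rn n)) (g : Rn n → ℂ) {l : ℝ} (hl : 0 < l) (x : Rn n) :
    sqV s σ g (Ici l) x
      ≤ ENNReal.ofReal (l ^ (-(2 * m)) / (2 * m)) * (ENNReal.ofReal Cs * ∫⁻ y, ‖g y‖ₑ ∂σ) ^ 2 :=
  sqV_Ici_le_of_enorm_theta_le s σ g hm hl fun _ ht =>
    hs.enorm_theta_le hCs hmα σ g (hl.trans_le ht) x

theorem SizeCond.setLIntegral_sqV_Ioi_le (hs : SizeCond n m α Cs s) (hCs : 0 ≤ Cs)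
    (hm : 0 < m) (hmα : 0 ≤ m + α) (ν : Measure (Rn n)) (f : Rn n → ℂ) (G : Set (Rn n)) {l : ℝ}
    (hl : 0 < l) :
    ∫⁻ x in G, sqV s ν f (Ioi 0) x ∂ν
      ≤ ∫⁻ x in G, sqV s ν f (Ioo 0 l) x ∂ν
        + ENNReal.ofReal (l ^ (-(2 * m)) / (2 * m))
          * (ENNReal.ofReal Cs * ∫⁻ y, ‖f y‖ₑ ∂ν) ^ 2 * ν G :=
  calc ∫⁻ x in G, sqV s ν f (Ioi 0) x ∂ν
      ≤ ∫⁻ x in G, (sqV s ν f (Ioo 0 l) x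
          + ENNReal.ofReal (l ^ (-(2 * m)) / (2 * m))
            * (ENNReal.ofReal Cs * ∫⁻ y, ‖f y‖ₑ ∂ν) ^ 2) ∂ν := by
        gcongr with x
        rw [sqV_Ioi_zero s ν f hl]
        gcongr
        exact hs.sqV_Ici_le hCs hm hmα ν f hl x
    _ = _ := by rw [lintegral_add_right _ measurable_const, setLIntegral_const]

end Tail

/-- `L`, `N`, `μG` play the roles of `‖f‖_{L¹(ν)}`, `‖f‖_{L²(ν)}` and `ν(G)`. -/
theorem tail_constant_le {m Cs A l : ℝ} (hm : 0 < m) (hCs : 0 ≤ Cs) (hA : 0 ≤ A) (hl : 0 < l)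
    {L N μG : ℝ≥0∞} (hL : L ^ 2 ≤ N ^ 2 * μG) (hμG : μG ≤ ENNReal.ofReal (A * l ^ m)) :
    ENNReal.ofReal (l ^ (-(2 * m)) / (2 * m)) * (ENNReal.ofReal Cs * L) ^ 2 * μG
      ≤ (ENNReal.ofReal (Cs * A / √(2 * m)) * N) ^ 2 := by
  have hreal :
      l ^ (-(2 * m)) / (2 * m) * Cs ^ 2 * (A * l ^ m) ^ 2 = (Cs * A / √(2 * m)) ^ 2 := by
    have hcancel : l ^ (-(2 * m)) * (l ^ m) ^ 2 = 1 := by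
      rw [← Real.rpow_natCast, ← Real.rpow_mul hl.le, ← Real.rpow_add hl]
      norm_num [mul_comm]
    rw [div_pow, Real.sq_sqrt (by positivity)]
    linear_combination Cs ^ 2 * A ^ 2 / (2 * m) * hcancel
  calc ENNReal.ofReal (l ^ (-(2 * m)) / (2 * m)) * (ENNReal.ofReal Cs * L) ^ 2 * μG
      = ENNReal.ofReal (l ^ (-(2 * m)) / (2 * m)) * ENNReal.ofReal Cs ^ 2 * (L ^ 2 * μG) := by
        ring
    _ ≤ ENNReal.ofReal (l ^ (-(2 * m)) / (2 * m)) * ENNReal.ofReal Cs ^ 2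
          * (N ^ 2 * ENNReal.ofReal (A * l ^ m) ^ 2) := by
        refine mul_le_mul_right ?_ _
        calc L ^ 2 * μG ≤ N ^ 2 * μG * μG := by gcongr
          _ = N ^ 2 * μG ^ 2 := by ring
          _ ≤ _ := by gcongr
    _ = ENNReal.ofReal (l ^ (-(2 * m)) / (2 * m)) * ENNReal.ofReal (Cs ^ 2)
          * ENNReal.ofReal ((A * l ^ m) ^ 2) * N ^ 2 := by
        rw [ENNReal.ofReal_pow hCs, ENNReal.ofReal_pow (by positivity)]
        ring
    _ = ENNReal.ofReal (l ^ (-(2 * m)) / (2 * m) * Cs ^ 2 * (A * l ^ m) ^ 2) * N ^ 2 := by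
        rw [ENNReal.ofReal_mul (by positivity), ENNReal.ofReal_mul (by positivity)]
    _ = _ := by rw [hreal, ENNReal.ofReal_pow (by positivity), mul_pow]

/-- Suppose the kernels satisfy the size condition, `Q` is a cube,
`G ⊆ Q`, and `ν` is a finite positive Borel measure with `ν(Q) ≤ A ℓ(Q)^m`.  If
`‖1_G V_{ν,Q} f‖_{L²(ν)} ≤ C₀ ‖f‖_{L²(ν)}` for every `f ∈ L²(ν)` supported in `G`,
then `‖1_G V_ν f‖_{L²(ν)} ≤ C ‖f‖_{L²(ν)}` for every `f ∈ L²(ν)` supported in `G`,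
where `C` depends only on `C₀`, `A`, `m` and the kernel size constant. -/
theorem statement1 (m Cs A C₀ : ℝ) (hm : 0 < m) (hCs : 0 < Cs) (hA : 0 < A)
    (hC₀ : 0 < C₀) :
    ∃ C : ℝ, 0 < C ∧
      ∀ (n : ℕ) (α : ℝ), 0 < α →
      ∀ sk : ℝ → Rn n → Rn n → ℂ,
        Measurable (fun p : ℝ × Rn n × Rn n => sk p.1 p.2.1 p.2.2) →
        SizeCond n m α Cs sk →
      ∀ (Q : Cube n) (G : Set (Rn n)), G ⊆ Q.set →
      ∀ (ν : Measure (Rn n)) [IsFiniteMeasure ν],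
        ν Q.set ≤ ENNReal.ofReal (A * Q.l ^ m) →
        (∀ f : Rn n → ℂ, Measurable f → MemLp f 2 ν → Function.support f ⊆ G →
          (∫⁻ x in G, sqV sk ν f (Set.Ioo 0 Q.l) x ∂ν) ^ (1/2 : ℝ)
            ≤ ENNReal.ofReal C₀ * (∫⁻ x, (‖f x‖₊ : ℝ≥0∞) ^ 2 ∂ν) ^ (1/2 : ℝ)) →
        ∀ f : Rn n → ℂ, Measurable f → MemLp f 2 ν → Function.support f ⊆ G →
          (∫⁻ x in G, sqV sk ν f (Set.Ioi 0) x ∂ν) ^ (1/2 : ℝ)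
            ≤ ENNReal.ofReal C * (∫⁻ x, (‖f x‖₊ : ℝ≥0∞) ^ 2 ∂ν) ^ (1/2 : ℝ) := by
  refine ⟨C₀ + Cs * A / √(2 * m), by positivity, ?_⟩
  intro n α hα sk _ hsize Q G hGQ ν _ hνQ hlocal f hfm hf hsupp
  simp only [← eLpNorm_two_eq_rpow_lintegral] at hlocal ⊢
  have htail := tail_constant_le hm hCs.le hA.le Q.l_pos
    (sq_lintegral_enorm_le_of_support_subset hf.aestronglyMeasurable hsupp)
    ((measure_mono hGQ).trans hνQ)
  calc (∫⁻ x in G, sqV sk ν f (Ioi 0) x ∂ν) ^ (1 / 2 : ℝ)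
      ≤ (∫⁻ x in G, sqV sk ν f (Ioo 0 Q.l) x ∂ν
          + (ENNReal.ofReal (Cs * A / √(2 * m)) * eLpNorm f 2 ν) ^ 2) ^ (1 / 2 : ℝ) := by
        gcongr
        exact (hsize.setLIntegral_sqV_Ioi_le hCs.le hm (by linarith) ν f G Q.l_pos).trans
          (add_le_add_right htail _)
    _ ≤ (∫⁻ x in G, sqV sk ν f (Ioo 0 Q.l) x ∂ν) ^ (1 / 2 : ℝ)
          + ENNReal.ofReal (Cs * A / √(2 * m)) * eLpNorm f 2 ν :=
        ENNReal.rpow_half_add_sq_le _ _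
    _ ≤ ENNReal.ofReal C₀ * eLpNorm f 2 ν
          + ENNReal.ofReal (Cs * A / √(2 * m)) * eLpNorm f 2 ν := by
        gcongr
        exact hlocal f hfm hf hsupp
    _ = ENNReal.ofReal (C₀ + Cs * A / √(2 * m)) * eLpNorm f 2 ν := by
        rw [ENNReal.ofReal_add hC₀.le (by positivity), add_mul]

end
end

section
/- Let Q ⊂ ℝ^n be a cube contained in the interior of the top cube of a dyadic lattice D₀, and let μ, σ be finite Borel measures on ℝ^n with supp μ ⊂ Q and supp σ ⊂ Q. Let B₁ ≥ 1, ε₀ ∈ (0,1), δ = 1/(32B₁). Assume: μ(Q) ≤ σ(Q) ≤ B₁ μ(Q), and for every Borel set A ⊂ Q with μ(A) ≤ ε₀ μ(Q) one has σ(A) ≤ σ(Q)/(32B₁). Let F₁ be the family of maximal cubes R ∈ D₀ with σ(R) > (B₁/ε₀) μ(R), let F₂ be the family of maximal cubes R ∈ D₀ with σ(R) < δ μ(R), and set H₁ = ∪_{R ∈ F₁ ∪ F₂} R. Then σ(H₁) ≤ 2δ σ(Q) = σ(Q)/(16B₁). -/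
open MeasureTheory Metric Set
open scoped ENNReal NNReal

noncomputable section

/-- The dyadic subcube of `Q₀` of generation `k`, position `j`. -/
def dyadicCube {n : ℕ} (Q₀ : Cube n) (k : ℕ) (j : Fin n → ℕ) : Cube n where
  c := WithLp.toLp 2 (fun i => Q₀.c i - Q₀.l / 2 + ((j i : ℝ) + 1 / 2) * (Q₀.l / 2 ^ k))
  l := Q₀.l / 2 ^ k
  l_pos := by have := Q₀.l_pos; positivity

/-- The dyadic lattice generated by a cube `Q₀`: all dyadic subcubes obtained from
`Q₀` by repeated bisection. -/
def dyadicLattice {n : ℕ} (Q₀ : Cube n) : Set (Cube n) :=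
  {R | ∃ (k : ℕ) (j : Fin n → ℕ), (∀ i, j i < 2 ^ k) ∧ R = dyadicCube Q₀ k j}

/-- The maximal cubes of the family `D` satisfying the property `P`: cubes of `D`
satisfying `P` such that no strictly larger cube of `D` containing them satisfies
`P`. -/
def maxCubes {n : ℕ} (D : Set (Cube n)) (P : Cube n → Prop) : Set (Cube n) :=
  {R | R ∈ D ∧ P R ∧ ∀ R' ∈ D, R.set ⊂ R'.set → ¬ P R'}

/-!
Maximal dyadic cubes are pairwise disjoint, so a measure inequality holding on each cube of
`F₁` or of `F₂` passes to their union. On `U₂ = ⋃ F₂` this gives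
`σ(U₂) ≤ δ μ(U₂) ≤ δ μ(Q) ≤ δ σ(Q)`. On `U₁ = ⋃ F₁` it gives
`μ(U₁) ≤ (ε₀/B₁) σ(U₁) ≤ (ε₀/B₁) σ(Q) ≤ ε₀ μ(Q)`, so the hypothesis on sets of small
`μ`-measure yields `σ(U₁) ≤ δ σ(Q)`.
-/

lemma Cube.measurableSet_set {n : ℕ} (Q : Cube n) : MeasurableSet Q.set := by
  have h : Q.set = ⋂ i, (fun x : Rn n => x i) ⁻¹' Ico (Q.c i - Q.l / 2) (Q.c i + Q.l / 2) := by
    ext x; simp [Cube.set]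
  rw [h]
  exact .iInter fun i => (measurable_pi_apply i).comp (PiLp.continuous_ofLp 2 _).measurable
    measurableSet_Ico

lemma dyadicLattice_countable {n : ℕ} (Q₀ : Cube n) : (dyadicLattice Q₀).Countable :=
  (countable_range fun p : ℕ × (Fin n → ℕ) => dyadicCube Q₀ p.1 p.2).mono <| by
    rintro R ⟨k, j, -, rfl⟩; exact ⟨(k, j), rfl⟩

lemma mem_dyadicCube_iff_floor {n : ℕ} (Q₀ : Cube n) (k : ℕ) (j : Fin n → ℕ) (x : Rn n) :
    x ∈ (dyadicCube Q₀ k j).set ↔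
      ∀ i, ⌊(x i - (Q₀.c i - Q₀.l / 2)) / (Q₀.l / 2 ^ k)⌋ = j i := by
  have hs : 0 < Q₀.l / 2 ^ k := (dyadicCube Q₀ k j).l_pos
  refine forall_congr' fun i => ?_
  rw [Int.floor_eq_iff, le_div_iff₀ hs, div_lt_iff₀ hs]
  simp only [dyadicCube, PiLp.toLp_apply, Int.cast_natCast]
  constructor <;> rintro ⟨h₁, h₂⟩ <;> constructor <;> linarith

lemma floor_div_div_two_pow {r L : ℝ} {k m : ℕ} (hkm : k ≤ m) :
    ⌊r / (L / 2 ^ k)⌋ = ⌊r / (L / 2 ^ m)⌋ / ((2 ^ (m - k) : ℕ) : ℤ) := by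
  rw [← Int.floor_div_natCast]
  congr 1
  obtain ⟨d, rfl⟩ := Nat.exists_eq_add_of_le hkm
  rw [Nat.add_sub_cancel_left, pow_add]
  push_cast
  rcases eq_or_ne L 0 with rfl | hL
  · simp
  · field_simp

/-- A common point `x` fixes both index vectors, and the generation-`k` index of any point is
its generation-`m` index divided by `2 ^ (m - k)`. -/
lemma dyadicCube_subset_of_not_disjoint {n : ℕ} (Q₀ : Cube n) {k m : ℕ} (hkm : k ≤ m)
    {j j' : Fin n → ℕ} (h : ¬Disjoint (dyadicCube Q₀ m j').set (dyadicCube Q₀ k j).set) :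
    (dyadicCube Q₀ m j').set ⊆ (dyadicCube Q₀ k j).set := by
  obtain ⟨x, hx', hx⟩ := not_disjoint_iff.mp h
  rw [mem_dyadicCube_iff_floor] at hx hx'
  intro y hy
  rw [mem_dyadicCube_iff_floor] at hy ⊢
  intro i
  rw [floor_div_div_two_pow hkm, hy i, ← hx' i, ← floor_div_div_two_pow hkm, hx i]

lemma dyadicLattice_subset_or_subset_or_disjoint {n : ℕ} (Q₀ : Cube n) {R R' : Cube n}
    (hR : R ∈ dyadicLattice Q₀) (hR' : R' ∈ dyadicLattice Q₀) :
    R.set ⊆ R'.set ∨ R'.set ⊆ R.set ∨ Disjoint R.set R'.set := by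
  obtain ⟨k, j, -, rfl⟩ := hR
  obtain ⟨m, j', -, rfl⟩ := hR'
  by_cases h : Disjoint (dyadicCube Q₀ k j).set (dyadicCube Q₀ m j').set
  · exact .inr (.inr h)
  rcases le_total k m with hkm | hmk
  · exact .inr (.inl (dyadicCube_subset_of_not_disjoint Q₀ hkm fun h' => h h'.symm))
  · exact .inl (dyadicCube_subset_of_not_disjoint Q₀ hmk h)

lemma pairwise_disjoint_image_maxCubes {n : ℕ} {D : Set (Cube n)}
    (hD : ∀ R ∈ D, ∀ R' ∈ D, R.set ⊆ R'.set ∨ R'.set ⊆ R.set ∨ Disjoint R.set R'.set)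
    (P : Cube n → Prop) : (Cube.set '' maxCubes D P).Pairwise Disjoint := by
  rintro _ ⟨R, hR, rfl⟩ _ ⟨R', hR', rfl⟩ hne
  rcases hD R hR.1 R' hR'.1 with h | h | h
  · exact absurd hR'.2.1 (hR.2.2 R' hR'.1 (h.ssubset_of_ne hne))
  · exact absurd hR.2.1 (hR'.2.2 R hR.1 (h.ssubset_of_ne hne.symm))
  · exact h

lemma measure_sUnion_le_of_forall_le {α : Type*} [MeasurableSpace α] {ν ρ : Measure α}
    {S : Set (Set α)} (hc : S.Countable) (hd : S.Pairwise Disjoint)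
    (hm : ∀ s ∈ S, MeasurableSet s) (h : ∀ s ∈ S, ν s ≤ ρ s) : ν (⋃₀ S) ≤ ρ (⋃₀ S) := by
  rw [measure_sUnion hc hd hm, measure_sUnion hc hd hm]
  exact ENNReal.tsum_le_tsum fun s => h s s.2

lemma measure_biUnion_maxCubes_le {n : ℕ} {ν ρ : Measure (Rn n)} (Q₀ : Cube n)
    {P : Cube n → Prop} (h : ∀ R, P R → ν R.set ≤ ρ R.set) :
    ν (⋃ R ∈ maxCubes (dyadicLattice Q₀) P, R.set) ≤
      ρ (⋃ R ∈ maxCubes (dyadicLattice Q₀) P, R.set) := by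
  rw [← sUnion_image]
  refine measure_sUnion_le_of_forall_le
    (((dyadicLattice_countable Q₀).mono fun R hR => hR.1).image _)
    (pairwise_disjoint_image_maxCubes
      (fun R hR R' hR' => dyadicLattice_subset_or_subset_or_disjoint Q₀ hR hR') P) ?_ ?_
  · rintro _ ⟨R, -, rfl⟩; exact R.measurableSet_set
  · rintro _ ⟨R, hR, rfl⟩; exact h R hR.2.1

lemma measure_biUnion_maxCubes_lt_le {n : ℕ} {μ σ : Measure (Rn n)} (R₀ Q : Cube n)
    (hμsupp : μ Q.setᶜ = 0) (δ : ℝ≥0∞) :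
    σ (⋃ R ∈ maxCubes (dyadicLattice R₀) (fun R => σ R.set < δ * μ R.set), R.set) ≤
      δ * μ Q.set := by
  set U := ⋃ R ∈ maxCubes (dyadicLattice R₀) (fun R => σ R.set < δ * μ R.set), R.set
  have hU : σ U ≤ (δ • μ) U := measure_biUnion_maxCubes_le R₀ fun R hR => hR.le
  calc σ U ≤ δ * μ U := hU
    _ = δ * μ (U ∩ Q.set) := by rw [measure_inter_conull hμsupp]
    _ ≤ δ * μ Q.set := by gcongr; exact inter_subset_right

lemma measure_biUnion_maxCubes_gt_le {n : ℕ} {μ σ : Measure (Rn n)} (R₀ Q : Cube n)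
    {B₁ ε₀ : ℝ} (hB₁ : 0 < B₁) (hε₀ : 0 < ε₀) (hσsupp : σ Q.setᶜ = 0)
    (h2 : σ Q.set ≤ ENNReal.ofReal B₁ * μ Q.set) {τ : ℝ≥0∞}
    (h4 : ∀ A : Set (Rn n), MeasurableSet A → A ⊆ Q.set →
      μ A ≤ ENNReal.ofReal ε₀ * μ Q.set → σ A ≤ τ) :
    σ (⋃ R ∈ maxCubes (dyadicLattice R₀)
      (fun R => ENNReal.ofReal (B₁ / ε₀) * μ R.set < σ R.set), R.set) ≤ τ := by
  set U := ⋃ R ∈ maxCubes (dyadicLattice R₀)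
    (fun R => ENNReal.ofReal (B₁ / ε₀) * μ R.set < σ R.set), R.set
  have hU : (ENNReal.ofReal (B₁ / ε₀) • μ) U ≤ σ U :=
    measure_biUnion_maxCubes_le R₀ fun R hR => hR.le
  have hσU : σ (U ∩ Q.set) = σ U := measure_inter_conull hσsupp
  have hμU : μ (U ∩ Q.set) ≤ ENNReal.ofReal ε₀ * μ Q.set := calc
    μ (U ∩ Q.set) ≤ μ U := measure_mono inter_subset_left
    _ = ENNReal.ofReal (ε₀ / B₁) * (ENNReal.ofReal (B₁ / ε₀) * μ U) := by
      rw [← mul_assoc, ← ENNReal.ofReal_mul (by positivity),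
        show ε₀ / B₁ * (B₁ / ε₀) = 1 by field_simp, ENNReal.ofReal_one, one_mul]
    _ ≤ ENNReal.ofReal (ε₀ / B₁) * (ENNReal.ofReal B₁ * μ Q.set) := by
      gcongr ENNReal.ofReal (ε₀ / B₁) * ?_
      calc _ ≤ σ U := hU
        _ = σ (U ∩ Q.set) := hσU.symm
        _ ≤ σ Q.set := measure_mono inter_subset_right
        _ ≤ _ := h2
    _ = ENNReal.ofReal ε₀ * μ Q.set := by
      rw [← mul_assoc, ← ENNReal.ofReal_mul (by positivity), div_mul_cancel₀ _ hB₁.ne']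
  rw [← hσU]
  have hUm : MeasurableSet U :=
    .biUnion ((dyadicLattice_countable R₀).mono fun R hR => hR.1) fun R _ => R.measurableSet_set
  exact h4 _ (hUm.inter Q.measurableSet_set) inter_subset_right hμU

theorem statement7_general (n : ℕ) (B₁ ε₀ : ℝ) (hB₁ : 1 ≤ B₁) (hε₀ : ε₀ ∈ Set.Ioo (0 : ℝ) 1)
    (R₀ Q : Cube n) (μ σ : Measure (Rn n))
    (hμsupp : μ Q.setᶜ = 0) (hσsupp : σ Q.setᶜ = 0)
    (h1 : μ Q.set ≤ σ Q.set) (h2 : σ Q.set ≤ ENNReal.ofReal B₁ * μ Q.set)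
    (h4 : ∀ A : Set (Rn n), MeasurableSet A → A ⊆ Q.set →
      μ A ≤ ENNReal.ofReal ε₀ * μ Q.set →
      σ A ≤ σ Q.set / ENNReal.ofReal (32 * B₁)) :
    σ (⋃ R ∈ maxCubes (dyadicLattice R₀)
            (fun R => ENNReal.ofReal (B₁ / ε₀) * μ R.set < σ R.set)
          ∪ maxCubes (dyadicLattice R₀)
            (fun R => σ R.set < ENNReal.ofReal (1 / (32 * B₁)) * μ R.set),
        Cube.set R)
      ≤ ENNReal.ofReal (2 * (1 / (32 * B₁))) * σ Q.set := by
  have hB₁pos : 0 < B₁ := one_pos.trans_le hB₁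
  have hdiv :
      σ Q.set / ENNReal.ofReal (32 * B₁) = ENNReal.ofReal (1 / (32 * B₁)) * σ Q.set := by
    rw [one_div, ENNReal.ofReal_inv_of_pos (by positivity), div_eq_mul_inv, mul_comm]
  set δ := ENNReal.ofReal (1 / (32 * B₁))
  rw [biUnion_union]
  calc _ ≤ _ + _ := measure_union_le _ _
    _ ≤ δ * σ Q.set + δ * σ Q.set := add_le_add
      (hdiv ▸ measure_biUnion_maxCubes_gt_le R₀ Q hB₁pos hε₀.1 hσsupp h2 h4)
      ((measure_biUnion_maxCubes_lt_le R₀ Q hμsupp δ).trans (by gcongr))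
    _ = ENNReal.ofReal (2 * (1 / (32 * B₁))) * σ Q.set := by
      rw [← add_mul, ← ENNReal.ofReal_add (by positivity) (by positivity), two_mul]

/-- Let `Q` be a cube contained in the interior of the top cube of a
dyadic lattice `D₀`, and let `μ, σ` be finite Borel measures supported on `Q` with
`μ(Q) ≤ σ(Q) ≤ B₁ μ(Q)` and such that `σ(A) ≤ σ(Q)/(32B₁)` whenever `A ⊆ Q` is Borel
with `μ(A) ≤ ε₀ μ(Q)`.  With `δ = 1/(32B₁)`, let `F₁` (resp. `F₂`) be the maximal cubes
`R ∈ D₀` with `σ(R) > (B₁/ε₀) μ(R)` (resp. `σ(R) < δ μ(R)`), and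
`H₁ = ⋃_{R ∈ F₁ ∪ F₂} R`.  Then `σ(H₁) ≤ 2δ σ(Q) = σ(Q)/(16B₁)`. -/
theorem statement7 (n : ℕ) (B₁ ε₀ : ℝ) (hB₁ : 1 ≤ B₁) (hε₀ : ε₀ ∈ Set.Ioo (0 : ℝ) 1)
    (R₀ Q : Cube n) (hQ : Q.set ⊆ interior R₀.set)
    (μ σ : Measure (Rn n)) [IsFiniteMeasure μ] [IsFiniteMeasure σ]
    (hμsupp : μ Q.setᶜ = 0) (hσsupp : σ Q.setᶜ = 0)
    (h1 : μ Q.set ≤ σ Q.set) (h2 : σ Q.set ≤ ENNReal.ofReal B₁ * μ Q.set)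
    (h4 : ∀ A : Set (Rn n), MeasurableSet A → A ⊆ Q.set →
      μ A ≤ ENNReal.ofReal ε₀ * μ Q.set →
      σ A ≤ σ Q.set / ENNReal.ofReal (32 * B₁)) :
    σ (⋃ R ∈ maxCubes (dyadicLattice R₀)
            (fun R => ENNReal.ofReal (B₁ / ε₀) * μ R.set < σ R.set)
          ∪ maxCubes (dyadicLattice R₀)
            (fun R => σ R.set < ENNReal.ofReal (1 / (32 * B₁)) * μ R.set),
        Cube.set R)
      ≤ ENNReal.ofReal (2 * (1 / (32 * B₁))) * σ Q.set :=
  statement7_general n B₁ ε₀ hB₁ hε₀ R₀ Q μ σ hμsupp hσsupp h1 h2 h4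

end
end

section
/- Let μ be a measure of order m on ℝ^n with constant C_μ, i.e. μ(B(x,r)) ≤ C_μ r^m for all x, r > 0. For a complex Borel measure ν define the radial maximal function M_{R,m} ν(x) = sup_{r>0} |ν|(B(x,r))/r^m. Then M_{R,m} maps M(ℝ^n) boundedly into L^{1,∞}(μ): for every complex Borel measure ν and every λ > 0, μ({x ∈ ℝ^n : M_{R,m} ν(x) > λ}) ≤ C ‖ν‖/λ, where C depends only on C_μ, m and n. -/
open MeasureTheory Metric Set
open scoped ENNReal NNReal

noncomputable section

/-- `μ` has order `m` with constant `Cμ`. -/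
def OrderM {n : ℕ} (μ : Measure (Rn n)) (m Cμ : ℝ) : Prop :=
  ∀ (x : Rn n) (r : ℝ), 0 < r → μ (Metric.ball x r) ≤ ENNReal.ofReal (Cμ * r ^ m)

/-- The radial maximal function `M_{R,m} ν(x) = sup_{r>0} |ν|(B(x,r))/r^m`, for a
(positive) measure `ν` (representing the variation `|ν|` of a complex measure). -/
def radMax {n : ℕ} (m : ℝ) (ν : Measure (Rn n)) (x : Rn n) : ℝ≥0∞ :=
  ⨆ (r : ℝ) (_ : 0 < r), ν (Metric.ball x r) / ENNReal.ofReal (r ^ m)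

/-! Every point where `M_{R,m} ν > λ` is the centre of a ball `B(x, r)` with
`λ r^m < |ν|(B(x, r))`. Finiteness of `ν` bounds these radii, so the Vitali covering lemma
extracts a disjoint subfamily whose enlargements `B(x, 4r)` cover the superlevel set.
Each enlargement has `μ`-measure at most `Cμ 5^m r^m < Cμ 5^m |ν|(B(x, r)) / λ`, and
summing over the disjoint family gives `λ μ({M_{R,m} ν > λ}) ≤ Cμ 5^m ‖ν‖`. -/

theorem Set.PairwiseDisjoint.countable_of_measure_pos {α ι : Type*} [MeasurableSpace α]
    {ν : Measure α} [SFinite ν] {s : Set ι} {f : ι → Set α} (hd : s.PairwiseDisjoint f)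
    (hf : ∀ i ∈ s, MeasurableSet (f i)) (hpos : ∀ i ∈ s, 0 < ν (f i)) : s.Countable := by
  have hcount := Measure.countable_meas_pos_of_disjoint_iUnion (μ := ν)
    (As := fun i : s => f i) (fun i => hf i i.2)
    (fun i j hij => hd i.2 j.2 (fun h => hij (Subtype.ext h)))
  rw [show {i : s | 0 < ν (f i)} = univ from eq_univ_of_forall (fun i => hpos i i.2),
    countable_univ_iff] at hcount
  exact countable_coe_iff.mp hcount

theorem mul_measure_le_of_forall_lt_measure_closedBall {α : Type*} [PseudoMetricSpace α]
    [MeasurableSpace α] [OpensMeasurableSpace α] {μ ν : Measure α} [SFinite ν]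
    (E : Set α) (r : α → ℝ) (R : ℝ) (hR : ∀ x ∈ E, r x ≤ R) (τ : ℝ) (hτ : 3 < τ)
    (a b : ℝ≥0∞)
    (h : ∀ x ∈ E, a * μ (closedBall x (τ * r x)) < b * ν (closedBall x (r x))) :
    a * μ E ≤ b * ν univ := by
  have hν_pos : ∀ x ∈ E, 0 < ν (closedBall x (r x)) := fun x hx =>
    pos_of_ne_zero (right_ne_zero_of_mul (h x hx).ne_bot)
  have hr_nonneg : ∀ x ∈ E, 0 ≤ r x := fun x hx =>
    nonempty_closedBall.mp (nonempty_of_measure_ne_zero (hν_pos x hx).ne')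
  obtain ⟨u, huE, hdisj, hcover⟩ :=
    Vitali.exists_disjoint_subfamily_covering_enlargement_closedBall E id r R hR τ hτ
  have hu : u.Countable :=
    hdisj.countable_of_measure_pos (fun _ _ => measurableSet_closedBall)
      (fun x hx => hν_pos x (huE hx))
  have hE : E ⊆ ⋃ x ∈ u, closedBall x (τ * r x) := fun y hy => by
    obtain ⟨x, hx, hsub⟩ := hcover y hy
    exact mem_biUnion hx (hsub (mem_closedBall_self (hr_nonneg y hy)))
  calc a * μ E ≤ a * ∑' x : u, μ (closedBall x (τ * r x)) := by
        gcongr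
        exact (measure_mono hE).trans (measure_biUnion_le μ hu _)
    _ = ∑' x : u, a * μ (closedBall x (τ * r x)) := ENNReal.tsum_mul_left.symm
    _ ≤ ∑' x : u, b * ν (closedBall x (r x)) :=
        ENNReal.tsum_le_tsum fun x => (h x (huE x.2)).le
    _ = b * ν (⋃ x ∈ u, closedBall x (r x)) := by
        rw [ENNReal.tsum_mul_left,
          measure_biUnion (f := fun x => closedBall x (r x)) hu hdisj
            fun _ _ => measurableSet_closedBall]
    _ ≤ b * ν univ := by gcongr; exact subset_univ _

theorem le_rpow_inv_of_ofReal_mul_rpow_le_measure {α : Type*} [MeasurableSpace α]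
    {ν : Measure α} [IsFiniteMeasure ν] {s : Set α} {lam m r : ℝ} (hlam : 0 < lam)
    (hm : 0 < m) (hr : 0 ≤ r) (h : ENNReal.ofReal (lam * r ^ m) ≤ ν s) :
    r ≤ ((ν univ).toReal / lam) ^ m⁻¹ := by
  have hle : lam * r ^ m ≤ (ν univ).toReal :=
    (ENNReal.ofReal_le_iff_le_toReal (measure_ne_top ν _)).mp
      (h.trans (measure_mono (subset_univ s)))
  rw [Real.le_rpow_inv_iff_of_pos hr (by positivity) hm, le_div_iff₀ hlam]
  linarith

theorem exists_ofReal_mul_rpow_lt_measure_ball_of_lt_radMax {n : ℕ} {m lam : ℝ}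
    {ν : Measure (Rn n)} {x : Rn n} (hx : ENNReal.ofReal lam < radMax m ν x) :
    ∃ r : ℝ, 0 < r ∧ ENNReal.ofReal lam * ENNReal.ofReal (r ^ m) < ν (ball x r) := by
  simp only [radMax, lt_iSup_iff] at hx
  obtain ⟨r, hr, hlt⟩ := hx
  have hrm : ENNReal.ofReal (r ^ m) ≠ 0 := by simpa using Real.rpow_pos_of_pos hr m
  exact ⟨r, hr, (ENNReal.lt_div_iff_mul_lt (.inl hrm) (.inl ENNReal.ofReal_ne_top)).mp hlt⟩

theorem OrderM.measure_closedBall_four_mul_le {n : ℕ} {μ : Measure (Rn n)} {m Cμ : ℝ}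
    (hμ : OrderM μ m Cμ) (x : Rn n) {r : ℝ} (hr : 0 < r) :
    μ (closedBall x (4 * r)) ≤ ENNReal.ofReal (Cμ * 5 ^ m) * ENNReal.ofReal (r ^ m) := by
  calc μ (closedBall x (4 * r)) ≤ μ (ball x (5 * r)) :=
        measure_mono (closedBall_subset_ball (by linarith))
    _ ≤ ENNReal.ofReal (Cμ * (5 * r) ^ m) := hμ x _ (by positivity)
    _ = ENNReal.ofReal (Cμ * 5 ^ m) * ENNReal.ofReal (r ^ m) := by
        rw [Real.mul_rpow (by norm_num) hr.le, ← mul_assoc,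
          ENNReal.ofReal_mul' (Real.rpow_nonneg hr.le m)]

/-- If `μ` has order `m`, then the radial maximal operator `M_{R,m}`
maps `M(ℝⁿ)` boundedly into `L^{1,∞}(μ)`: for every finite (variation of a complex)
measure `ν` and every `λ > 0`,
`μ({x : M_{R,m} ν(x) > λ}) ≤ C ‖ν‖ / λ`, with `C` depending only on `Cμ, m, n`. -/
theorem statement9 (n : ℕ) (m Cμ : ℝ) (hm : 0 < m) (hCμ : 0 < Cμ) :
    ∃ C : ℝ, 0 < C ∧
      ∀ μ : Measure (Rn n), OrderM μ m Cμ →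
      ∀ (ν : Measure (Rn n)) [IsFiniteMeasure ν],
      ∀ lam : ℝ, 0 < lam →
        ENNReal.ofReal lam * μ {x | ENNReal.ofReal lam < radMax m ν x}
          ≤ ENNReal.ofReal C * ν Set.univ := by
  refine ⟨Cμ * 5 ^ m, by positivity, fun μ hμ ν _ lam hlam => ?_⟩
  set E := {x | ENNReal.ofReal lam < radMax m ν x}
  choose! r hr_pos hr_lt using fun x (hx : x ∈ E) =>
    exists_ofReal_mul_rpow_lt_measure_ball_of_lt_radMax hx
  refine mul_measure_le_of_forall_lt_measure_closedBall E r (((ν univ).toReal / lam) ^ m⁻¹)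
    (fun x hx => le_rpow_inv_of_ofReal_mul_rpow_le_measure hlam hm (hr_pos x hx).le
      ((ENNReal.ofReal_mul hlam.le).trans_le (hr_lt x hx).le)) 4 (by norm_num) _ _
    (fun x hx => ?_)
  have hC : ENNReal.ofReal (Cμ * 5 ^ m) ≠ 0 := (ENNReal.ofReal_pos.mpr (by positivity)).ne'
  calc ENNReal.ofReal lam * μ (closedBall x (4 * r x))
      ≤ ENNReal.ofReal lam * (ENNReal.ofReal (Cμ * 5 ^ m) * ENNReal.ofReal (r x ^ m)) := by
        gcongr; exact hμ.measure_closedBall_four_mul_le x (hr_pos x hx)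
    _ = ENNReal.ofReal (Cμ * 5 ^ m) * (ENNReal.ofReal lam * ENNReal.ofReal (r x ^ m)) := by ring
    _ < ENNReal.ofReal (Cμ * 5 ^ m) * ν (ball x (r x)) :=
        ENNReal.mul_lt_mul_right hC ENNReal.ofReal_ne_top (hr_lt x hx)
    _ ≤ ENNReal.ofReal (Cμ * 5 ^ m) * ν (closedBall x (r x)) := by
        gcongr; exact ball_subset_closedBall

end
end

section
/- Let σ be a finite Borel measure on ℝ^n, m > 0, and p₀ > 0. Define p(x) = sup_{r>0} σ(B(x,r))/r^m, and for each x with p(x) > p₀ set r(x) = sup{r > 0 : σ(B(x,r)) > p₀ r^m} (which is finite since σ is finite), and let H₂ = ∪_{x : p(x) > p₀} B(x, r(x)). Then: (a) H₂ ⊂ {y ∈ ℝ^n : p(y) ≥ p₀/2^m}; (b) every ball B(z,r) with σ(B(z,r)) > p₀ r^m is contained in H₂. -/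
/-!
If `y ∈ B(x,r)` with `σ(B(x,r)) > p₀ r^m`, then `B(x,r) ⊆ B(y,2r)`, so
`p(y) ≥ σ(B(y,2r))/(2r)^m > p₀/2^m`; by the definition of `r(x)` as a supremum every point of
`B(x,r(x))` lies in such a ball, which gives (a). For (b), finiteness of `σ` bounds the radii `r`
with `σ(B(z,r)) > p₀ r^m` by `(σ(ℝⁿ)/p₀)^{1/m}`, so `r ≤ r(z)`, while `p(z) ≥ σ(B(z,r))/r^m > p₀`.
-/

open MeasureTheory Metric Set
open scoped ENNReal NNReal

noncomputable section

/-- `p(x) = sup_{r>0} σ(B(x,r))/r^m`. -/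
def pfun {n : ℕ} (σ : Measure (Rn n)) (m : ℝ) (x : Rn n) : ℝ≥0∞ :=
  ⨆ (r : ℝ) (_ : 0 < r), σ (Metric.ball x r) / ENNReal.ofReal (r ^ m)

/-- `r(x) = sup {r > 0 : σ(B(x,r)) > p₀ r^m}`. -/
def rfun {n : ℕ} (σ : Measure (Rn n)) (m p₀ : ℝ) (x : Rn n) : ℝ :=
  sSup {r : ℝ | 0 < r ∧ ENNReal.ofReal (p₀ * r ^ m) < σ (Metric.ball x r)}

/-- `H₂ = ⋃_{x : p(x) > p₀} B(x, r(x))`. -/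
def H2set {n : ℕ} (σ : Measure (Rn n)) (m p₀ : ℝ) : Set (Rn n) :=
  ⋃ x ∈ {x : Rn n | ENNReal.ofReal p₀ < pfun σ m x}, Metric.ball x (rfun σ m p₀ x)

namespace Statement10

variable {n : ℕ} {σ : Measure (Rn n)} {m p₀ c r : ℝ} {x y : Rn n}

def heavyRadii (σ : Measure (Rn n)) (m p₀ : ℝ) (x : Rn n) : Set ℝ :=
  {r : ℝ | 0 < r ∧ ENNReal.ofReal (p₀ * r ^ m) < σ (ball x r)}

theorem rfun_eq_sSup_heavyRadii : rfun σ m p₀ x = sSup (heavyRadii σ m p₀ x) := rfl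

theorem measure_ball_div_le_pfun (hr : 0 < r) :
    σ (ball x r) / ENNReal.ofReal (r ^ m) ≤ pfun σ m x :=
  le_iSup₂ (f := fun (s : ℝ) (_ : 0 < s) => σ (ball x s) / ENNReal.ofReal (s ^ m)) r hr

theorem ofReal_le_pfun (hc : 0 ≤ c) (hr : 0 < r)
    (h : ENNReal.ofReal (c * r ^ m) ≤ σ (ball x r)) : ENNReal.ofReal c ≤ pfun σ m x := by
  refine le_trans ?_ (measure_ball_div_le_pfun hr)
  rw [ENNReal.le_div_iff_mul_le (Or.inl (by simpa using Real.rpow_pos_of_pos hr m))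
    (Or.inl ENNReal.ofReal_ne_top), ← ENNReal.ofReal_mul hc]
  exact h

theorem ofReal_lt_pfun (hc : 0 ≤ c) (hr : 0 < r)
    (h : ENNReal.ofReal (c * r ^ m) < σ (ball x r)) : ENNReal.ofReal c < pfun σ m x := by
  refine lt_of_lt_of_le ?_ (measure_ball_div_le_pfun hr)
  rw [ENNReal.lt_div_iff_mul_lt (Or.inl (by simpa using Real.rpow_pos_of_pos hr m))
    (Or.inl ENNReal.ofReal_ne_top), ← ENNReal.ofReal_mul hc]
  exact h

theorem ofReal_div_two_rpow_le_pfun (hp₀ : 0 ≤ p₀) (hr : 0 < r)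
    (h : ENNReal.ofReal (p₀ * r ^ m) < σ (ball x r)) (hy : dist y x < r) :
    ENNReal.ofReal (p₀ / 2 ^ m) ≤ pfun σ m y := by
  have hball : ball x r ⊆ ball y (2 * r) :=
    ball_subset_ball' (by rw [dist_comm]; linarith)
  have hscale : p₀ / 2 ^ m * (2 * r) ^ m = p₀ * r ^ m := by
    rw [Real.mul_rpow zero_le_two hr.le]
    field_simp [(Real.rpow_pos_of_pos two_pos m).ne']
  refine ofReal_le_pfun (r := 2 * r) (by positivity) (by positivity) ?_
  rw [hscale]
  exact h.le.trans (measure_mono hball)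

theorem heavyRadii_subset_Iic [IsFiniteMeasure σ] (hm : 0 < m) (hp₀ : 0 < p₀) :
    heavyRadii σ m p₀ x ⊆ Iic (((σ univ).toReal / p₀) ^ (1 / m)) := by
  rintro r ⟨hr, h⟩
  have hmass : p₀ * r ^ m ≤ (σ univ).toReal :=
    (ENNReal.ofReal_le_iff_le_toReal (measure_ne_top σ _)).mp
      (h.le.trans (measure_mono (subset_univ _)))
  calc r = (r ^ m) ^ (1 / m) := by
        rw [← Real.rpow_mul hr.le, mul_one_div_cancel hm.ne', Real.rpow_one]
    _ ≤ ((σ univ).toReal / p₀) ^ (1 / m) := by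
        gcongr
        rwa [le_div_iff₀ hp₀, mul_comm]

theorem bddAbove_heavyRadii [IsFiniteMeasure σ] (hm : 0 < m) (hp₀ : 0 < p₀) :
    BddAbove (heavyRadii σ m p₀ x) :=
  ⟨_, heavyRadii_subset_Iic hm hp₀⟩

theorem le_rfun [IsFiniteMeasure σ] (hm : 0 < m) (hp₀ : 0 < p₀)
    (hr : r ∈ heavyRadii σ m p₀ x) : r ≤ rfun σ m p₀ x :=
  le_csSup (bddAbove_heavyRadii hm hp₀) hr

/-- The junk value `sSup ∅ = 0` makes `B(x, r(x))` empty when no radius is heavy. -/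
theorem exists_heavyRadii_of_mem_ball_rfun [IsFiniteMeasure σ] (hm : 0 < m) (hp₀ : 0 < p₀)
    (hy : y ∈ ball x (rfun σ m p₀ x)) : ∃ r ∈ heavyRadii σ m p₀ x, dist y x < r := by
  rcases (heavyRadii σ m p₀ x).eq_empty_or_nonempty with hempty | hne
  · rw [rfun_eq_sSup_heavyRadii, hempty, Real.sSup_empty, ball_zero] at hy
    exact hy.elim
  · exact (lt_csSup_iff (bddAbove_heavyRadii hm hp₀) hne).mp hy

end Statement10

open Statement10 in
/-- For a finite Borel measure `σ`, `m > 0` and `p₀ > 0`: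
(a) `H₂ ⊆ {y : p(y) ≥ p₀/2^m}`;
(b) every ball `B(z,r)` with `σ(B(z,r)) > p₀ r^m` is contained in `H₂`. -/
theorem statement10 (n : ℕ) (m p₀ : ℝ) (hm : 0 < m) (hp₀ : 0 < p₀)
    (σ : Measure (Rn n)) [IsFiniteMeasure σ] :
    H2set σ m p₀ ⊆ {y : Rn n | ENNReal.ofReal (p₀ / 2 ^ m) ≤ pfun σ m y}
    ∧ ∀ (z : Rn n) (r : ℝ), 0 < r →
        ENNReal.ofReal (p₀ * r ^ m) < σ (Metric.ball z r) →
        Metric.ball z r ⊆ H2set σ m p₀ := by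
  refine ⟨fun y hy => ?_, fun z r hr h => ?_⟩
  · obtain ⟨x, -, hyx⟩ := mem_iUnion₂.mp hy
    obtain ⟨r, ⟨hr, h⟩, hyr⟩ := exists_heavyRadii_of_mem_ball_rfun hm hp₀ hyx
    exact ofReal_div_two_rpow_le_pfun hp₀.le hr h hyr
  · have hz : ENNReal.ofReal p₀ < pfun σ m z := ofReal_lt_pfun hp₀.le hr h
    exact (ball_subset_ball (le_rfun hm hp₀ ⟨hr, h⟩)).trans
      (subset_biUnion_of_mem (u := fun x => ball x (rfun σ m p₀ x)) hz)

end
end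

section
/- Let m, α > 0, let D and D' be two dyadic lattices of cubes in ℝ^n, and let σ be a finite Borel measure such that σ(λP) ≤ C₀ λ^m ℓ(P)^m for every λ ≥ 1 and every cube P ∈ D ∪ D'. For cubes P, R define D(P,R) = ℓ(P) + ℓ(R) + d(P,R) and A_{PR} = ℓ(P)^{α/2} ℓ(R)^{α/2} D(P,R)^{−(m+α)} σ(P)^{1/2} σ(R)^{1/2}. Then for all nonnegative families (x_P)_{P ∈ D} and (y_R)_{R ∈ D'}: Σ_{P ∈ D} Σ_{R ∈ D'} A_{PR} x_P y_R ≤ C (Σ_P x_P²)^{1/2} (Σ_R y_R²)^{1/2}, where C depends only on n, m, α and C₀. In particular, (Σ_{R ∈ D'} [Σ_{P ∈ D} A_{PR} x_P]²)^{1/2} ≤ C (Σ_P x_P²)^{1/2}. -/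
open MeasureTheory Metric Set
open scoped ENNReal NNReal

noncomputable section

/-- The matrix `A_{PR} = ℓ(P)^{α/2} ℓ(R)^{α/2} D(P,R)^{-(m+α)} σ(P)^{1/2} σ(R)^{1/2}`. -/
def Amat {n : ℕ} (σ : Measure (Rn n)) (m α : ℝ) (P R : Cube n) : ℝ≥0∞ :=
  ENNReal.ofReal (P.l ^ (α / 2) * R.l ^ (α / 2) / Cube.longDist P R ^ (m + α))
    * (σ P.set) ^ (1/2 : ℝ) * (σ R.set) ^ (1/2 : ℝ)


/-!
By the Schur test with weights `σ(P)`, `σ(R)` it suffices to bound the row sums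
`∑_{R ∈ D'} ℓ(P)^{α/2} ℓ(R)^{α/2} D(P,R)^{-(m+α)} σ(R)` uniformly in `P` (and symmetrically the
column sums). The cubes `R` of one generation, of side `s`, are disjoint; those with
`D(P,R) < 2^{j+1} E`, `E = ℓ(P) + s`, lie in a dilate of `P` of side `≤ 6 · 2^j E`, so the growth
condition bounds the sum over one generation by `≲ s^{α/2} (ℓ(P) + s)^{-α}`. Along the generations
`s = 2^{-k} ℓ(R₀')` this is `ℓ(P)^{-α/2}` times a two-sided geometric series.
-/

namespace ENNReal

lemma rpow_half_sq (a : ℝ≥0∞) : (a ^ (1/2 : ℝ)) ^ 2 = a := by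
  rw [← rpow_natCast, ← rpow_mul]; norm_num

lemma sq_rpow_half (a : ℝ≥0∞) : (a ^ 2) ^ (1/2 : ℝ) = a := by
  rw [← rpow_natCast, ← rpow_mul]; norm_num

lemma rpow_half_mul_self (a : ℝ≥0∞) : a ^ (1/2 : ℝ) * a ^ (1/2 : ℝ) = a := by
  rw [← sq, rpow_half_sq]

lemma tsum_mul_le_sqrt_mul_sqrt {ι : Type*} (f g : ι → ℝ≥0∞) :
    ∑' i, f i * g i ≤ (∑' i, f i ^ 2) ^ (1/2 : ℝ) * (∑' i, g i ^ 2) ^ (1/2 : ℝ) := by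
  rw [ENNReal.tsum_eq_iSup_sum]
  refine iSup_le fun s => ?_
  calc ∑ i ∈ s, f i * g i
      ≤ (∑ i ∈ s, f i ^ (2 : ℝ)) ^ (1/2 : ℝ) * (∑ i ∈ s, g i ^ (2 : ℝ)) ^ (1/2 : ℝ) :=
        inner_le_Lp_mul_Lq s f g Real.HolderConjugate.two_two
    _ ≤ (∑' i, f i ^ 2) ^ (1/2 : ℝ) * (∑' i, g i ^ 2) ^ (1/2 : ℝ) := by
        simp only [rpow_two]
        gcongr <;> exact ENNReal.sum_le_tsum s

lemma tsum_mul_sq_le {ι : Type*} (f g : ι → ℝ≥0∞) :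
    (∑' i, f i * g i) ^ 2 ≤ (∑' i, f i ^ 2) * ∑' i, g i ^ 2 := by
  calc (∑' i, f i * g i) ^ 2
      ≤ ((∑' i, f i ^ 2) ^ (1/2 : ℝ) * (∑' i, g i ^ 2) ^ (1/2 : ℝ)) ^ 2 := by
        gcongr; exact tsum_mul_le_sqrt_mul_sqrt f g
    _ = (∑' i, f i ^ 2) * ∑' i, g i ^ 2 := by rw [mul_pow, rpow_half_sq, rpow_half_sq]

end ENNReal

section SchurTest

open ENNReal

variable {ι κ : Type*} (K : ι → κ → ℝ≥0∞) (v : ι → ℝ≥0∞) (w : κ → ℝ≥0∞) {B : ℝ≥0∞}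

/-- **Schur test** with weights `v`, `w`. -/
theorem schur_test_l2 (hrow : ∀ i, ∑' j, K i j * w j ≤ B) (hcol : ∀ j, ∑' i, K i j * v i ≤ B)
    (x : ι → ℝ≥0∞) :
    (∑' j, (∑' i, K i j * v i ^ (1/2 : ℝ) * w j ^ (1/2 : ℝ) * x i) ^ 2) ^ (1/2 : ℝ)
      ≤ B * (∑' i, x i ^ 2) ^ (1/2 : ℝ) := by
  have hfactor : ∀ i j, K i j * v i ^ (1/2 : ℝ) * w j ^ (1/2 : ℝ) * x i
      = (K i j * v i) ^ (1/2 : ℝ) * ((K i j * w j) ^ (1/2 : ℝ) * x i) := by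
    intro i j
    rw [mul_rpow_of_nonneg _ _ (by norm_num), mul_rpow_of_nonneg _ _ (by norm_num)]
    nth_rw 1 [← rpow_half_mul_self (K i j)]
    ring
  have hcolumn : ∀ j, (∑' i, K i j * v i ^ (1/2 : ℝ) * w j ^ (1/2 : ℝ) * x i) ^ 2
      ≤ B * ∑' i, K i j * w j * x i ^ 2 := by
    intro j
    calc (∑' i, K i j * v i ^ (1/2 : ℝ) * w j ^ (1/2 : ℝ) * x i) ^ 2
        ≤ (∑' i, ((K i j * v i) ^ (1/2 : ℝ)) ^ 2)
            * ∑' i, ((K i j * w j) ^ (1/2 : ℝ) * x i) ^ 2 := by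
          simp only [hfactor]; exact tsum_mul_sq_le _ _
      _ = (∑' i, K i j * v i) * ∑' i, K i j * w j * x i ^ 2 := by
          simp only [mul_pow, rpow_half_sq]
      _ ≤ B * ∑' i, K i j * w j * x i ^ 2 := by gcongr; exact hcol j
  calc (∑' j, (∑' i, K i j * v i ^ (1/2 : ℝ) * w j ^ (1/2 : ℝ) * x i) ^ 2) ^ (1/2 : ℝ)
      ≤ (∑' j, B * ∑' i, K i j * w j * x i ^ 2) ^ (1/2 : ℝ) := by
        gcongr; exact hcolumn _
    _ = (B * ∑' i, (∑' j, K i j * w j) * x i ^ 2) ^ (1/2 : ℝ) := by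
        simp only [ENNReal.tsum_mul_left]
        rw [ENNReal.tsum_comm]
        simp only [ENNReal.tsum_mul_right]
    _ ≤ (B * ∑' i, B * x i ^ 2) ^ (1/2 : ℝ) := by gcongr; exact hrow _
    _ = B * (∑' i, x i ^ 2) ^ (1/2 : ℝ) := by
        rw [ENNReal.tsum_mul_left, ← mul_assoc, ← sq, mul_rpow_of_nonneg _ _ (by norm_num),
          sq_rpow_half]

theorem schur_test (hrow : ∀ i, ∑' j, K i j * w j ≤ B) (hcol : ∀ j, ∑' i, K i j * v i ≤ B)
    (x : ι → ℝ≥0∞) (y : κ → ℝ≥0∞) :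
    ∑' i, ∑' j, K i j * v i ^ (1/2 : ℝ) * w j ^ (1/2 : ℝ) * x i * y j
      ≤ B * (∑' i, x i ^ 2) ^ (1/2 : ℝ) * (∑' j, y j ^ 2) ^ (1/2 : ℝ) := by
  calc ∑' i, ∑' j, K i j * v i ^ (1/2 : ℝ) * w j ^ (1/2 : ℝ) * x i * y j
      = ∑' j, (∑' i, K i j * v i ^ (1/2 : ℝ) * w j ^ (1/2 : ℝ) * x i) * y j := by
        rw [ENNReal.tsum_comm]; simp only [ENNReal.tsum_mul_right]
    _ ≤ (∑' j, (∑' i, K i j * v i ^ (1/2 : ℝ) * w j ^ (1/2 : ℝ) * x i) ^ 2) ^ (1/2 : ℝ)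
          * (∑' j, y j ^ 2) ^ (1/2 : ℝ) := tsum_mul_le_sqrt_mul_sqrt _ _
    _ ≤ B * (∑' i, x i ^ 2) ^ (1/2 : ℝ) * (∑' j, y j ^ 2) ^ (1/2 : ℝ) := by
        gcongr; exact schur_test_l2 K v w hrow hcol x

end SchurTest

lemma ENNReal.tsum_ofReal_geometric {r : ℝ} (h₀ : 0 ≤ r) (h₁ : r < 1) :
    ∑' k : ℕ, ENNReal.ofReal (r ^ k) = ENNReal.ofReal (1 - r)⁻¹ := by
  rw [← ENNReal.ofReal_tsum_of_nonneg (fun k => pow_nonneg h₀ k)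
    (summable_geometric_of_lt_one h₀ h₁), tsum_geometric_of_lt_one h₀ h₁]

lemma ENNReal.tsum_ofReal_min_inv_le {A ρ : ℝ} (hA : 0 < A) (hρ₀ : 0 < ρ) (hρ₁ : ρ < 1) :
    ∑' k : ℕ, ENNReal.ofReal (min (A * ρ ^ k) (A * ρ ^ k)⁻¹) ≤ ENNReal.ofReal (2 / (1 - ρ)) := by
  have hex : ∃ k : ℕ, A * ρ ^ k ≤ 1 := by
    obtain ⟨k, hk⟩ := exists_pow_lt_of_lt_one (inv_pos.2 hA) hρ₁
    exact ⟨k, by rw [← le_inv_mul_iff₀ hA, mul_one]; exact hk.le⟩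
  -- the terms peak near the first `N` with `A ρ^N ≤ 1` and decay geometrically on both sides
  set N := Nat.find hex
  have hhead : ∀ k < N, min (A * ρ ^ k) (A * ρ ^ k)⁻¹ ≤ ρ ^ (N - 1 - k) := by
    intro k hk
    have hN : 1 < A * ρ ^ (N - 1) := not_le.1 (Nat.find_min hex (by omega))
    have hsplit : A * ρ ^ (N - 1) = A * ρ ^ k * ρ ^ (N - 1 - k) := by
      rw [mul_assoc, ← pow_add, Nat.add_sub_cancel' (by omega)]
    refine (min_le_right _ _).trans ?_
    rw [inv_le_iff_one_le_mul₀ (by positivity)]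
    linarith
  have htail : ∀ k, min (A * ρ ^ (k + N)) (A * ρ ^ (k + N))⁻¹ ≤ ρ ^ k := by
    intro k
    have hN : A * ρ ^ N ≤ 1 := Nat.find_spec hex
    refine (min_le_left _ _).trans ?_
    rw [pow_add, ← mul_assoc, mul_comm A, mul_assoc]
    exact mul_le_of_le_one_right (by positivity) hN
  rw [← ENNReal.summable.sum_add_tsum_nat_add' (k := N)]
  calc ∑ k ∈ Finset.range N, ENNReal.ofReal (min (A * ρ ^ k) (A * ρ ^ k)⁻¹)
        + ∑' k, ENNReal.ofReal (min (A * ρ ^ (k + N)) (A * ρ ^ (k + N))⁻¹)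
      ≤ ∑ k ∈ Finset.range N, ENNReal.ofReal (ρ ^ (N - 1 - k)) + ∑' k, ENNReal.ofReal (ρ ^ k) := by
        gcongr with k hk
        · exact hhead k (Finset.mem_range.1 hk)
        · exact htail k
    _ ≤ ∑' k, ENNReal.ofReal (ρ ^ k) + ∑' k, ENNReal.ofReal (ρ ^ k) := by
        rw [Finset.sum_range_reflect (fun k => ENNReal.ofReal (ρ ^ k)) N]
        gcongr
        exact ENNReal.sum_le_tsum _
    _ = ENNReal.ofReal (2 / (1 - ρ)) := by
        have hinv : 0 ≤ (1 - ρ)⁻¹ := inv_nonneg.2 (sub_pos.2 hρ₁).le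
        rw [ENNReal.tsum_ofReal_geometric hρ₀.le hρ₁, ← ENNReal.ofReal_add hinv hinv]
        congr 1
        ring

lemma Real.rpow_mul_add_rpow_neg_le {ℓ s α : ℝ} (hℓ : 0 < ℓ) (hs : 0 < s) (hα : 0 ≤ α) :
    s ^ (α / 2) * (ℓ + s) ^ (-α)
      ≤ ℓ ^ (-(α / 2)) * min ((s / ℓ) ^ (α / 2)) ((s / ℓ) ^ (α / 2))⁻¹ := by
  have hsq : ∀ x : ℝ, 0 < x → x ^ α = x ^ (α / 2) * x ^ (α / 2) := fun x hx => by
    rw [← Real.rpow_add hx, add_halves]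
  have hℓ' := Real.rpow_pos_of_pos hℓ (α / 2)
  have hs' := Real.rpow_pos_of_pos hs (α / 2)
  rw [mul_min_of_nonneg _ _ (by positivity)]
  refine le_min ?_ ?_
  · calc s ^ (α / 2) * (ℓ + s) ^ (-α) ≤ s ^ (α / 2) * ℓ ^ (-α) := by
          refine mul_le_mul_of_nonneg_left (Real.rpow_le_rpow_of_nonpos hℓ ?_ ?_) hs'.le <;>
            linarith
      _ = ℓ ^ (-(α / 2)) * (s / ℓ) ^ (α / 2) := by
          rw [Real.rpow_neg hℓ.le, Real.rpow_neg hℓ.le, hsq ℓ hℓ, Real.div_rpow hs.le hℓ.le]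
          field_simp
  · calc s ^ (α / 2) * (ℓ + s) ^ (-α) ≤ s ^ (α / 2) * s ^ (-α) := by
          refine mul_le_mul_of_nonneg_left (Real.rpow_le_rpow_of_nonpos hs ?_ ?_) hs'.le <;>
            linarith
      _ = ℓ ^ (-(α / 2)) * ((s / ℓ) ^ (α / 2))⁻¹ := by
          rw [Real.rpow_neg hs.le, Real.rpow_neg hℓ.le, hsq s hs, Real.div_rpow hs.le hℓ.le]
          field_simp

namespace Cube

variable {n : ℕ}

lemma dist_nonneg (P R : Cube n) : 0 ≤ Cube.dist P R :=
  Real.sInf_nonneg (by rintro d ⟨x, -, y, -, rfl⟩; exact _root_.dist_nonneg)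

lemma dist_comm (P R : Cube n) : Cube.dist P R = Cube.dist R P := by
  rw [Cube.dist, Cube.dist, Set.image2_swap]
  simp only [_root_.dist_comm]

lemma longDist_comm (P R : Cube n) : longDist P R = longDist R P := by
  rw [longDist, longDist, dist_comm, add_comm P.l]

lemma center_mem_set (Q : Cube n) : Q.c ∈ Q.set := fun i => by
  have := Q.l_pos
  constructor <;> linarith

lemma exists_mem_mem_dist_lt {P R : Cube n} {T : ℝ} (h : Cube.dist P R < T) :
    ∃ p ∈ P.set, ∃ r ∈ R.set, Dist.dist p r < T := by
  have hne : (Set.image2 (fun x y => Dist.dist x y) P.set R.set).Nonempty :=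
    ⟨_, Set.mem_image2_of_mem P.center_mem_set R.center_mem_set⟩
  obtain ⟨_, ⟨p, hp, r, hr, rfl⟩, hlt⟩ := exists_lt_of_csInf_lt hne h
  exact ⟨p, hp, r, hr, hlt⟩

lemma measurableSet_set_s12 (Q : Cube n) : MeasurableSet Q.set := by
  have : Q.set = ⋂ i, (fun x : Rn n => x i) ⁻¹' Set.Ico (Q.c i - Q.l / 2) (Q.c i + Q.l / 2) := by
    ext x; simp [Cube.set]
  rw [this]
  exact MeasurableSet.iInter fun i =>
    measurableSet_Ico.preimage (EuclideanSpace.proj (𝕜 := ℝ) i).continuous.measurable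

lemma set_subset_dilatedSet_of_dist_lt {Q R : Cube n} {T : ℝ} (hd : Cube.dist Q R < T) :
    R.set ⊆ Q.dilatedSet ((Q.l + 2 * R.l + 2 * T) / Q.l) := by
  obtain ⟨p, hp, r, hr, hpr⟩ := exists_mem_mem_dist_lt hd
  intro x hx i
  have hQ := Q.l_pos
  have hpr_i : |p i - r i| < T := (PiLp.dist_apply_le p r i).trans_lt hpr
  have hlam : (Q.l + 2 * R.l + 2 * T) / Q.l * Q.l / 2 = Q.l / 2 + R.l + T := by
    field_simp
  rw [hlam]
  obtain ⟨hx₁, hx₂⟩ := hx i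
  obtain ⟨hr₁, hr₂⟩ := hr i
  obtain ⟨hp₁, hp₂⟩ := hp i
  obtain ⟨hpr₁, hpr₂⟩ := abs_lt.1 hpr_i
  constructor <;> linarith

end Cube

section DyadicLattice

open Function

variable {n : ℕ} (Q₀ : Cube n)

lemma dyadicCube_injective {k k' : ℕ} {j j' : Fin n → ℕ}
    (h : dyadicCube Q₀ k j = dyadicCube Q₀ k' j') : k = k' ∧ j = j' := by
  have hL := Q₀.l_pos
  have hk : k = k' := by
    have hl : Q₀.l / 2 ^ k = Q₀.l / 2 ^ k' := congrArg Cube.l h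
    rw [div_eq_mul_inv, div_eq_mul_inv, mul_right_inj' hL.ne', inv_inj] at hl
    exact Nat.pow_right_injective le_rfl (by exact_mod_cast hl)
  subst hk
  refine ⟨rfl, funext fun i => ?_⟩
  have hc := congrArg (fun Q : Cube n => Q.c i) h
  simp only [dyadicCube, WithLp.ofLp_toLp, add_right_inj] at hc
  have : (j i : ℝ) = j' i := by
    have := mul_right_cancel₀ (by positivity : Q₀.l / 2 ^ k ≠ 0) hc
    linarith
  exact_mod_cast this

def dyadicCubeOf (p : Σ k : ℕ, Fin n → Fin (2 ^ k)) : Cube n :=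
  dyadicCube Q₀ p.1 (fun i => p.2 i)

lemma dyadicCubeOf_injective : Injective (dyadicCubeOf Q₀) := by
  rintro ⟨k, j⟩ ⟨k', j'⟩ h
  obtain ⟨rfl, hj⟩ := dyadicCube_injective Q₀ h
  congr
  funext i
  exact Fin.ext (congrFun hj i)

lemma dyadicLattice_eq_range : dyadicLattice Q₀ = Set.range (dyadicCubeOf Q₀) := by
  ext R
  constructor
  · rintro ⟨k, j, hj, rfl⟩
    exact ⟨⟨k, fun i => ⟨j i, hj i⟩⟩, rfl⟩
  · rintro ⟨⟨k, j⟩, rfl⟩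
    exact ⟨k, fun i => j i, fun i => (j i).2, rfl⟩

lemma tsum_dyadicLattice (f : Cube n → ℝ≥0∞) :
    ∑' R : dyadicLattice Q₀, f R
      = ∑' k : ℕ, ∑' j : Fin n → Fin (2 ^ k), f (dyadicCubeOf Q₀ ⟨k, j⟩) := by
  rw [dyadicLattice_eq_range, tsum_range f (dyadicCubeOf_injective Q₀), ENNReal.tsum_sigma']

lemma pairwise_disjoint_dyadicCube (k : ℕ) :
    Pairwise (Disjoint on (fun j : Fin n → ℕ => (dyadicCube Q₀ k j).set)) := by
  intro j j' hjj'
  obtain ⟨i, hi⟩ := ne_iff.1 hjj'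
  refine Set.disjoint_left.2 fun x hx hx' => hi ?_
  obtain ⟨hx₁, hx₂⟩ := hx i
  obtain ⟨hx₁', hx₂'⟩ := hx' i
  simp only [dyadicCube, WithLp.ofLp_toLp] at hx₁ hx₂ hx₁' hx₂'
  have hs : 0 < Q₀.l / 2 ^ k := (dyadicCube Q₀ k j).l_pos
  have hlt : ∀ a b : ℕ, a < b → (a : ℝ) + 1 ≤ b := fun a b h => by exact_mod_cast h
  rcases lt_trichotomy (j i) (j' i) with h | h | h
  · nlinarith [hlt _ _ h]
  · exact h
  · nlinarith [hlt _ _ h]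

end DyadicLattice

section Growth

open Function

variable {n : ℕ} (σ : Measure (Rn n)) (m C₀ : ℝ)

def Cube.GrowthBound (Q : Cube n) : Prop :=
  ∀ lam : ℝ, 1 ≤ lam → σ (Q.dilatedSet lam) ≤ ENNReal.ofReal (C₀ * lam ^ m * Q.l ^ m)

variable {σ m C₀} {Q : Cube n} {ι : Type*} [Fintype ι] {R : ι → Cube n} {s : ℝ}

lemma Cube.GrowthBound.sum_measure_filter_dist_lt_le (hσ : Q.GrowthBound σ m C₀)
    (hR : Pairwise (Disjoint on fun i => (R i).set)) (hs : ∀ i, (R i).l = s) (hs₀ : 0 ≤ s)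
    {T : ℝ} (hT : 0 ≤ T) :
    ∑ i with Cube.dist Q (R i) < T, σ (R i).set
      ≤ ENNReal.ofReal (C₀ * (Q.l + 2 * s + 2 * T) ^ m) := by
  have hQ := Q.l_pos
  set lam := (Q.l + 2 * s + 2 * T) / Q.l
  have hlam : 1 ≤ lam := by rw [le_div_iff₀ hQ]; linarith
  calc ∑ i with Cube.dist Q (R i) < T, σ (R i).set
      = σ (⋃ i ∈ Finset.univ.filter (fun i => Cube.dist Q (R i) < T), (R i).set) :=
        (measure_biUnion_finset (fun i _ j _ hij => hR hij)
          fun i _ => (R i).measurableSet_set_s12).symm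
    _ ≤ σ (Q.dilatedSet lam) := by
        refine measure_mono (Set.iUnion₂_subset fun i hi => ?_)
        have := Cube.set_subset_dilatedSet_of_dist_lt (Finset.mem_filter.1 hi).2
        rwa [hs] at this
    _ ≤ ENNReal.ofReal (C₀ * (Q.l + 2 * s + 2 * T) ^ m) := by
        refine (hσ lam hlam).trans_eq ?_
        rw [mul_assoc, ← Real.mul_rpow (by positivity) hQ.le, div_mul_cancel₀ _ hQ.ne']

lemma Cube.GrowthBound.sum_kernel_mul_measure_le (hσ : Q.GrowthBound σ m C₀) (hm : 0 ≤ m)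
    {α : ℝ} (hα : 0 < α) (hC₀ : 0 ≤ C₀)
    (hR : Pairwise (Disjoint on fun i => (R i).set)) (hs : ∀ i, (R i).l = s) (hs₀ : 0 < s) :
    ∑ i, ENNReal.ofReal (s ^ (α / 2) / Cube.longDist Q (R i) ^ (m + α)) * σ (R i).set
      ≤ ENNReal.ofReal (C₀ * 6 ^ m / (1 - 2 ^ (-α)) * (s ^ (α / 2) * (Q.l + s) ^ (-α))) := by
  have hQ := Q.l_pos
  set E := Q.l + s
  have hE₀ : 0 < E := by positivity
  set r : ℝ := 2 ^ (-α)
  have hr₀ : 0 < r := by positivity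
  have hr₁ : r < 1 := Real.rpow_lt_one_of_one_lt_of_neg one_lt_two (by linarith)
  set c := C₀ * 6 ^ m * s ^ (α / 2) * E ^ (-α) with hc_def
  have hc : 0 ≤ c := by positivity
  set a : ℕ → ℝ≥0∞ := fun j => ENNReal.ofReal (s ^ (α / 2) / (2 ^ j * E) ^ (m + α))
  have hD : ∀ i, Cube.longDist Q (R i) = E + Cube.dist Q (R i) := fun i => by
    rw [Cube.longDist, hs]
  -- sort the cubes into the annuli `2^j E ≤ D(Q, R) < 2^(j+1) E`, each inside a dilate of `Q`
  have hannuli : ∀ i, ENNReal.ofReal (s ^ (α / 2) / Cube.longDist Q (R i) ^ (m + α)) * σ (R i).set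
      ≤ ∑' j, a j * if Cube.dist Q (R i) < 2 ^ (j + 1) * E then σ (R i).set else 0 := by
    intro i
    have h1 : 1 ≤ Cube.longDist Q (R i) / E := by
      rw [le_div_iff₀ hE₀, hD]; linarith [Cube.dist_nonneg Q (R i)]
    obtain ⟨j, hj₁, hj₂⟩ := exists_nat_pow_near h1 one_lt_two
    rw [le_div_iff₀ hE₀] at hj₁
    rw [div_lt_iff₀ hE₀] at hj₂
    refine le_trans ?_ (ENNReal.le_tsum j)
    rw [if_pos (by linarith [hD i, Cube.dist_nonneg Q (R i)])]
    dsimp only [a]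
    gcongr
  have hannulus : ∀ j, a j * ∑ i with Cube.dist Q (R i) < 2 ^ (j + 1) * E, σ (R i).set
      ≤ ENNReal.ofReal (c * r ^ j) := by
    intro j
    have h2j : (1 : ℝ) ≤ 2 ^ j := one_le_pow₀ one_le_two
    have hG : 0 < 2 ^ j * E := by positivity
    refine (mul_le_mul_right
      (hσ.sum_measure_filter_dist_lt_le hR hs hs₀.le (by positivity)) _).trans ?_
    rw [← ENNReal.ofReal_mul (by positivity)]
    refine ENNReal.ofReal_le_ofReal ?_
    calc s ^ (α / 2) / (2 ^ j * E) ^ (m + α) * (C₀ * (Q.l + 2 * s + 2 * (2 ^ (j + 1) * E)) ^ m)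
        ≤ s ^ (α / 2) / (2 ^ j * E) ^ (m + α) * (C₀ * (6 * (2 ^ j * E)) ^ m) := by
          gcongr
          rw [pow_succ]
          nlinarith
      _ = c * r ^ j := by
          have h2jα : ((2 : ℝ) ^ j) ^ (-α) = r ^ j := (Real.rpow_pow_comm zero_le_two _ _).symm
          rw [hc_def, Real.mul_rpow (by norm_num) hG.le, Real.rpow_add hG, ← h2jα,
            Real.rpow_neg hE₀.le, Real.rpow_neg (by positivity : (0 : ℝ) ≤ 2 ^ j),
            Real.mul_rpow (by positivity) hE₀.le (z := α)]
          field_simp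
  calc ∑ i, ENNReal.ofReal (s ^ (α / 2) / Cube.longDist Q (R i) ^ (m + α)) * σ (R i).set
      ≤ ∑ i, ∑' j, a j * if Cube.dist Q (R i) < 2 ^ (j + 1) * E then σ (R i).set else 0 :=
        Finset.sum_le_sum fun i _ => hannuli i
    _ = ∑' j, a j * ∑ i with Cube.dist Q (R i) < 2 ^ (j + 1) * E, σ (R i).set := by
        rw [← Summable.tsum_finsetSum fun _ _ => ENNReal.summable]
        simp only [← Finset.mul_sum, Finset.sum_ite, Finset.sum_const_zero, add_zero]
    _ ≤ ∑' j, ENNReal.ofReal (c * r ^ j) := ENNReal.tsum_le_tsum hannulus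
    _ = ENNReal.ofReal (C₀ * 6 ^ m / (1 - 2 ^ (-α)) * (s ^ (α / 2) * (Q.l + s) ^ (-α))) := by
        simp_rw [ENNReal.ofReal_mul hc, ENNReal.tsum_mul_left]
        rw [ENNReal.tsum_ofReal_geometric hr₀.le hr₁, ← ENNReal.ofReal_mul hc]
        congr 1
        ring

end Growth

/-- `C₀ 6^m / (1 - 2^(-α))` bounds the sum over one generation of `D'`, and
`2 / (1 - 2^(-α/2))` the sum over the generations. -/
def schurConst (m α C₀ : ℝ) : ℝ := C₀ * 6 ^ m / (1 - 2 ^ (-α)) * (2 / (1 - 2 ^ (-(α / 2))))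

lemma schurConst_pos {m α C₀ : ℝ} (hα : 0 < α) (hC₀ : 0 < C₀) : 0 < schurConst m α C₀ := by
  have h₁ : (2 : ℝ) ^ (-α) < 1 := Real.rpow_lt_one_of_one_lt_of_neg one_lt_two (by linarith)
  have h₂ : (2 : ℝ) ^ (-(α / 2)) < 1 := Real.rpow_lt_one_of_one_lt_of_neg one_lt_two (by linarith)
  have := sub_pos.2 h₁
  have := sub_pos.2 h₂
  unfold schurConst
  positivity

namespace Cube.GrowthBound

variable {n : ℕ} {σ : Measure (Rn n)} {m α C₀ : ℝ} {Q : Cube n}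

lemma tsum_dyadicLattice_le (hσ : Q.GrowthBound σ m C₀) (hm : 0 ≤ m) (hα : 0 < α) (hC₀ : 0 ≤ C₀)
    (Q₀ : Cube n) :
    ∑' R : dyadicLattice Q₀, ENNReal.ofReal ((R : Cube n).l ^ (α / 2)
        / Cube.longDist Q R ^ (m + α)) * σ (R : Cube n).set
      ≤ ENNReal.ofReal (schurConst m α C₀ * Q.l ^ (-(α / 2))) := by
  have hQ := Q.l_pos
  have hQ₀ := Q₀.l_pos
  set C₁ := C₀ * 6 ^ m / (1 - 2 ^ (-α)) with hC₁_def
  have hC₁ : 0 ≤ C₁ := by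
    have := Real.rpow_lt_one_of_one_lt_of_neg one_lt_two (neg_neg_of_pos hα)
    have := sub_pos.2 this
    positivity
  set ρ : ℝ := 2 ^ (-(α / 2)) with hρ_def
  have hρ₀ : 0 < ρ := by positivity
  have hρ₁ : ρ < 1 := Real.rpow_lt_one_of_one_lt_of_neg one_lt_two (by linarith)
  set A := (Q₀.l / Q.l) ^ (α / 2)
  have hA : 0 < A := Real.rpow_pos_of_pos (div_pos hQ₀ hQ) _
  have hgen : ∀ k : ℕ, ((Q₀.l / 2 ^ k) / Q.l) ^ (α / 2) = A * ρ ^ k := fun k => by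
    rw [div_right_comm, div_eq_mul_inv, Real.mul_rpow (by positivity) (by positivity),
      Real.inv_rpow (by positivity), ← Real.rpow_neg (by positivity),
      ← Real.rpow_pow_comm zero_le_two]
  have hgeneration : ∀ k : ℕ, ∑' j : Fin n → Fin (2 ^ k),
      ENNReal.ofReal ((dyadicCubeOf Q₀ ⟨k, j⟩).l ^ (α / 2)
        / Cube.longDist Q (dyadicCubeOf Q₀ ⟨k, j⟩) ^ (m + α)) * σ (dyadicCubeOf Q₀ ⟨k, j⟩).set
      ≤ ENNReal.ofReal (C₁ * Q.l ^ (-(α / 2)))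
          * ENNReal.ofReal (min (A * ρ ^ k) (A * ρ ^ k)⁻¹) := by
    intro k
    have hs : 0 < Q₀.l / 2 ^ k := by positivity
    rw [tsum_fintype, ← ENNReal.ofReal_mul (mul_nonneg hC₁ (by positivity))]
    refine (hσ.sum_kernel_mul_measure_le hm hα hC₀
      (R := fun j : Fin n → Fin (2 ^ k) => dyadicCubeOf Q₀ ⟨k, j⟩)
      (fun j j' hjj' => pairwise_disjoint_dyadicCube Q₀ k
        fun h => hjj' (funext fun i => Fin.ext (congrFun h i))) (fun j => rfl) hs).trans ?_
    refine ENNReal.ofReal_le_ofReal ?_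
    rw [mul_assoc, ← hgen]
    exact mul_le_mul_of_nonneg_left (Real.rpow_mul_add_rpow_neg_le hQ hs hα.le) hC₁
  calc ∑' R : dyadicLattice Q₀, ENNReal.ofReal ((R : Cube n).l ^ (α / 2)
        / Cube.longDist Q R ^ (m + α)) * σ (R : Cube n).set
      ≤ ∑' k : ℕ, ENNReal.ofReal (C₁ * Q.l ^ (-(α / 2)))
          * ENNReal.ofReal (min (A * ρ ^ k) (A * ρ ^ k)⁻¹) := by
        rw [tsum_dyadicLattice Q₀ fun R => ENNReal.ofReal (R.l ^ (α / 2)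
          / Cube.longDist Q R ^ (m + α)) * σ R.set]
        exact ENNReal.tsum_le_tsum hgeneration
    _ ≤ ENNReal.ofReal (C₁ * Q.l ^ (-(α / 2))) * ENNReal.ofReal (2 / (1 - ρ)) := by
        rw [ENNReal.tsum_mul_left]
        gcongr
        exact ENNReal.tsum_ofReal_min_inv_le hA hρ₀ hρ₁
    _ = ENNReal.ofReal (schurConst m α C₀ * Q.l ^ (-(α / 2))) := by
        rw [← ENNReal.ofReal_mul (mul_nonneg hC₁ (by positivity)), schurConst, hC₁_def, hρ_def]
        ring_nf

lemma tsum_kernel_mul_measure_le (hσ : Q.GrowthBound σ m C₀) (hm : 0 ≤ m) (hα : 0 < α)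
    (hC₀ : 0 ≤ C₀) (Q₀ : Cube n) :
    ∑' R : dyadicLattice Q₀, ENNReal.ofReal (Q.l ^ (α / 2) * (R : Cube n).l ^ (α / 2)
        / Cube.longDist Q R ^ (m + α)) * σ (R : Cube n).set
      ≤ ENNReal.ofReal (schurConst m α C₀) := by
  have hQ := Q.l_pos
  calc ∑' R : dyadicLattice Q₀, ENNReal.ofReal (Q.l ^ (α / 2) * (R : Cube n).l ^ (α / 2)
        / Cube.longDist Q R ^ (m + α)) * σ (R : Cube n).set
      = ENNReal.ofReal (Q.l ^ (α / 2)) * ∑' R : dyadicLattice Q₀, ENNReal.ofReal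
          ((R : Cube n).l ^ (α / 2) / Cube.longDist Q R ^ (m + α)) * σ (R : Cube n).set := by
        rw [← ENNReal.tsum_mul_left]
        refine tsum_congr fun R => ?_
        rw [mul_div_assoc, ENNReal.ofReal_mul (by positivity), mul_assoc]
    _ ≤ ENNReal.ofReal (Q.l ^ (α / 2)) * ENNReal.ofReal (schurConst m α C₀ * Q.l ^ (-(α / 2))) := by
        gcongr
        exact hσ.tsum_dyadicLattice_le hm hα hC₀ Q₀
    _ = ENNReal.ofReal (schurConst m α C₀) := by
        rw [← ENNReal.ofReal_mul (by positivity), mul_left_comm, ← Real.rpow_add hQ,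
          add_neg_cancel, Real.rpow_zero, mul_one]

end Cube.GrowthBound

/-- (Nazarov–Treil–Volberg Schur-type estimate.)  If `σ` is a finite
Borel measure with `σ(λP) ≤ C₀ λ^m ℓ(P)^m` for all `λ ≥ 1` and all cubes `P` of the two
dyadic lattices `D, D'`, then for all nonnegative families `(x_P)`, `(y_R)`:
`Σ_{P,R} A_{PR} x_P y_R ≤ C (Σ x_P²)^{1/2} (Σ y_R²)^{1/2}`, and in particular
`(Σ_R [Σ_P A_{PR} x_P]²)^{1/2} ≤ C (Σ x_P²)^{1/2}`, with `C = C(n, m, α, C₀)`. -/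
theorem statement12 (n : ℕ) (m α C₀ : ℝ) (hm : 0 < m) (hα : 0 < α) (hC₀ : 0 < C₀) :
    ∃ C : ℝ, 0 < C ∧
      ∀ (R₀ R₀' : Cube n) (σ : Measure (Rn n)) [IsFiniteMeasure σ],
        (∀ P ∈ dyadicLattice R₀ ∪ dyadicLattice R₀', ∀ lam : ℝ, 1 ≤ lam →
          σ (Cube.dilatedSet P lam) ≤ ENNReal.ofReal (C₀ * lam ^ m * P.l ^ m)) →
      ∀ x y : Cube n → ℝ≥0∞,
        (∑' P : dyadicLattice R₀, ∑' R : dyadicLattice R₀',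
            Amat σ m α (P : Cube n) (R : Cube n) * x (P : Cube n) * y (R : Cube n))
          ≤ ENNReal.ofReal C
              * (∑' P : dyadicLattice R₀, x (P : Cube n) ^ 2) ^ (1/2 : ℝ)
              * (∑' R : dyadicLattice R₀', y (R : Cube n) ^ 2) ^ (1/2 : ℝ)
        ∧ (∑' R : dyadicLattice R₀',
              (∑' P : dyadicLattice R₀,
                  Amat σ m α (P : Cube n) (R : Cube n) * x (P : Cube n)) ^ 2)
                ^ (1/2 : ℝ)
            ≤ ENNReal.ofReal C
                * (∑' P : dyadicLattice R₀, x (P : Cube n) ^ 2) ^ (1/2 : ℝ) := by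
  refine ⟨schurConst m α C₀, schurConst_pos hα hC₀, fun R₀ R₀' σ _ hσ x y => ?_⟩
  set K : dyadicLattice R₀ → dyadicLattice R₀' → ℝ≥0∞ := fun P R =>
    ENNReal.ofReal ((P : Cube n).l ^ (α / 2) * (R : Cube n).l ^ (α / 2)
      / Cube.longDist (P : Cube n) (R : Cube n) ^ (m + α))
  have hrow : ∀ P, ∑' R, K P R * σ (R : Cube n).set ≤ ENNReal.ofReal (schurConst m α C₀) :=
    fun P => Cube.GrowthBound.tsum_kernel_mul_measure_le (hσ P (Or.inl P.2)) hm.le hα hC₀.le R₀'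
  have hcol : ∀ R, ∑' P, K P R * σ (P : Cube n).set ≤ ENNReal.ofReal (schurConst m α C₀) := by
    intro R
    have hK : ∀ P, K P R = ENNReal.ofReal ((R : Cube n).l ^ (α / 2) * (P : Cube n).l ^ (α / 2)
        / Cube.longDist (R : Cube n) (P : Cube n) ^ (m + α)) := fun P => by
      rw [Cube.longDist_comm, mul_comm]
    simp only [hK]
    exact Cube.GrowthBound.tsum_kernel_mul_measure_le (hσ R (Or.inr R.2)) hm.le hα hC₀.le R₀
  exact ⟨schur_test K _ _ hrow hcol _ _, schur_test_l2 K _ _ hrow hcol _⟩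
end
end

section
/- Let m, α > 0 and γ = α/(2m + 2α). Let P, R be cubes in ℝ^n with ℓ(R) ≤ ℓ(P) and d(P,R) > ℓ(R)^γ ℓ(P)^{1−γ}. Then d(P,R)^{m+α} ≥ c D(P,R)^{m+α} (ℓ(R)/ℓ(P))^{α/2}, where D(P,R) = ℓ(P) + ℓ(R) + d(P,R) and c > 0 depends only on m and α. Equivalently, ℓ(R)^α / d(P,R)^{m+α} ≤ C ℓ(P)^{α/2} ℓ(R)^{α/2} / D(P,R)^{m+α}. -/
open MeasureTheory Metric Set
open scoped ENNReal NNReal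

noncomputable section

/-! Write `r = ℓ(R) ≤ L = ℓ(P)` and `s = m + α`, so that `γ s = α/2` and the separation hypothesis
reads `d > L (r/L)^γ`. If `d ≥ L`, then `D ≤ 3d` and the factor `(r/L)^(γs) ≤ 1` is harmless; if
`d < L`, then `D ≤ 3L`, and raising `L (r/L)^γ < d` to the power `s` absorbs `(r/L)^(γs)`. In both
cases `D^s (r/L)^(α/2) ≤ 3^s d^s`, and the second inequality is a rearrangement of this one. -/

lemma div_rpow_mul_self {r L : ℝ} (hr : 0 ≤ r) (hL : 0 < L) (γ : ℝ) :
    (r / L) ^ γ * L = r ^ γ * L ^ (1 - γ) := by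
  rw [Real.div_rpow hr hL.le, Real.rpow_sub hL, Real.rpow_one]
  field_simp

lemma add_add_rpow_mul_div_rpow_le {r L d γ s : ℝ} (hr : 0 < r) (hrL : r ≤ L) (hγ : 0 ≤ γ)
    (hs : 0 ≤ s) (hd : r ^ γ * L ^ (1 - γ) < d) :
    (L + r + d) ^ s * (r / L) ^ (γ * s) ≤ (3 * d) ^ s := by
  have hL : 0 < L := hr.trans_le hrL
  have hratio : 0 ≤ r / L := by positivity
  have hd_pos : 0 < d := lt_of_le_of_lt (by positivity) hd
  rcases le_or_gt L d with hLd | hdL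
  · have hratio_le : (r / L) ^ (γ * s) ≤ 1 :=
      Real.rpow_le_one hratio (div_le_one_of_le₀ hrL hL.le) (by positivity)
    calc (L + r + d) ^ s * (r / L) ^ (γ * s) ≤ (L + r + d) ^ s :=
          mul_le_of_le_one_right (by positivity) hratio_le
      _ ≤ (3 * d) ^ s := Real.rpow_le_rpow (by positivity) (by linarith) hs
  · calc (L + r + d) ^ s * (r / L) ^ (γ * s) ≤ (3 * L) ^ s * ((r / L) ^ γ) ^ s := by
          rw [Real.rpow_mul hratio]
          gcongr
          linarith
      _ = (3 * ((r / L) ^ γ * L)) ^ s := by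
          rw [← Real.mul_rpow (by positivity) (by positivity)]
          ring_nf
      _ ≤ (3 * d) ^ s := by
          rw [div_rpow_mul_self hr.le hL]
          gcongr

lemma rpow_div_le_of_mul_div_rpow_le {r L d D α K : ℝ} (hr : 0 < r) (hL : 0 < L) (hd : 0 < d)
    (hD : 0 < D) (h : D * (r / L) ^ (α / 2) ≤ K * d) :
    r ^ α / d ≤ K * (L ^ (α / 2) * r ^ (α / 2) / D) := by
  rw [Real.div_rpow hr.le hL.le, mul_div_assoc', div_le_iff₀ (by positivity)] at h
  rw [← add_halves α, Real.rpow_add hr, add_halves, mul_div_assoc',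
    div_le_div_iff₀ hd hD]
  calc r ^ (α / 2) * r ^ (α / 2) * D = r ^ (α / 2) * (D * r ^ (α / 2)) := by ring
    _ ≤ r ^ (α / 2) * (K * d * L ^ (α / 2)) := by gcongr
    _ = K * (L ^ (α / 2) * r ^ (α / 2)) * d := by ring

/-- With `γ = α/(2m+2α)`, if `ℓ(R) ≤ ℓ(P)` and
`d(P,R) > ℓ(R)^γ ℓ(P)^{1-γ}`, then
`d(P,R)^{m+α} ≥ c D(P,R)^{m+α} (ℓ(R)/ℓ(P))^{α/2}`, equivalently
`ℓ(R)^α / d(P,R)^{m+α} ≤ C ℓ(P)^{α/2} ℓ(R)^{α/2} / D(P,R)^{m+α}`,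
with `c, C > 0` depending only on `m` and `α`. -/
theorem statement14 (m α : ℝ) (hm : 0 < m) (hα : 0 < α) :
    ∃ c C : ℝ, 0 < c ∧ 0 < C ∧
      ∀ (n : ℕ) (P R : Cube n), R.l ≤ P.l →
        R.l ^ (α / (2 * m + 2 * α)) * P.l ^ (1 - α / (2 * m + 2 * α)) < Cube.dist P R →
        c * (Cube.longDist P R ^ (m + α) * (R.l / P.l) ^ (α / 2))
            ≤ Cube.dist P R ^ (m + α)
        ∧ R.l ^ α / Cube.dist P R ^ (m + α)
            ≤ C * (P.l ^ (α / 2) * R.l ^ (α / 2) / Cube.longDist P R ^ (m + α)) := by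
  have hs : 0 < m + α := by linarith
  have hγs : α / (2 * m + 2 * α) * (m + α) = α / 2 := by field_simp
  refine ⟨(3 ^ (m + α))⁻¹, 3 ^ (m + α), by positivity, by positivity, fun n P R hRP hd => ?_⟩
  have hR := R.l_pos
  have hP := P.l_pos
  have hdist : 0 < Cube.dist P R := lt_of_le_of_lt (by positivity) hd
  have key := add_add_rpow_mul_div_rpow_le hR hRP (by positivity) hs.le hd
  rw [hγs, Real.mul_rpow (by norm_num) hdist.le, ← Cube.longDist] at key
  refine ⟨(inv_mul_le_iff₀ (by positivity)).2 key, ?_⟩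
  have hlong : 0 < Cube.longDist P R := by unfold Cube.longDist; positivity
  exact rpow_div_le_of_mul_div_rpow_le hR hP (by positivity) (by positivity) key

end
end

section
/- Let (s_t)_{t>0} be kernels satisfying the size condition with exponents m, α > 0. Let σ be a Borel measure on ℝ^n, x ∈ ℝ^n and d > 0, and suppose σ(B(x,ρ)) ≤ C₀ ρ^m for every ρ ≥ d/2. Let g be a Borel function with |g| ≤ 1 σ-a.e. and g = 0 on B(x, d/2). Then for every 0 < t ≤ d: |θ_t^σ g(x)| ≤ C (t/d)^α, where C depends only on C₀, m, α and the kernel size constant. -/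
/-!
Outside `B(x, d/2)` the size condition gives `|s_t(x,y)| ≤ C t^α |x - y|^{-(m+α)}`. Cutting
`B(x, d/2)ᶜ` into the dyadic annuli `2^j (d/2) ≤ |x - y| < 2^{j+1} (d/2)`, the growth bound on `σ`
makes the annulus `j` contribute `≲ t^α (2^j d)^{-α}`, and the geometric series sums to `≲ (t/d)^α`.
-/

open MeasureTheory Metric Set
open scoped ENNReal NNReal

noncomputable section

section GrowthTail

variable {X : Type*} [PseudoMetricSpace X]

theorem compl_ball_subset_iUnion_ball_diff_ball (x : X) {r : ℝ} (hr : 0 < r) :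
    (ball x r)ᶜ ⊆ ⋃ j : ℕ, ball x (2 ^ (j + 1) * r) \ ball x (2 ^ j * r) := by
  intro y hy
  have hry : 1 ≤ dist y x / r := by
    rw [one_le_div hr]
    simpa using hy
  obtain ⟨j, hj_le, hj_lt⟩ := exists_nat_pow_near hry one_lt_two
  refine mem_iUnion.2 ⟨j, mem_ball.2 ?_, fun hj => (mem_ball.1 hj).not_ge ?_⟩
  · rwa [div_lt_iff₀ hr] at hj_lt
  · rwa [le_div_iff₀ hr] at hj_le

variable [MeasurableSpace X] [OpensMeasurableSpace X]

theorem setLIntegral_ball_diff_ball_inv_dist_rpow_le (μ : Measure X) (x : X) {m α C₀ r : ℝ}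
    (hmα : 0 ≤ m + α) (hr : 0 < r) (j : ℕ)
    (hgrowth : μ (ball x (2 ^ (j + 1) * r)) ≤ ENNReal.ofReal (C₀ * (2 ^ (j + 1) * r) ^ m)) :
    ∫⁻ y in ball x (2 ^ (j + 1) * r) \ ball x (2 ^ j * r), ENNReal.ofReal (dist x y ^ (m + α))⁻¹ ∂μ
      ≤ ENNReal.ofReal (C₀ * 2 ^ m * r ^ (-α) * (2 ^ (-α)) ^ j) := by
  set a : ℝ := 2 ^ j * r
  have ha : 0 < a := by positivity
  have htwo_pow_succ : 2 ^ (j + 1) * r = 2 * a := by ring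
  rw [htwo_pow_succ] at hgrowth ⊢
  calc ∫⁻ y in ball x (2 * a) \ ball x a, ENNReal.ofReal (dist x y ^ (m + α))⁻¹ ∂μ
      ≤ ∫⁻ _ in ball x (2 * a) \ ball x a, ENNReal.ofReal (a ^ (m + α))⁻¹ ∂μ := by
        refine setLIntegral_mono' (measurableSet_ball.diff measurableSet_ball) fun y hy => ?_
        have hay : a ≤ dist x y := by simpa [dist_comm] using hy.2
        gcongr
    _ = ENNReal.ofReal (a ^ (m + α))⁻¹ * μ (ball x (2 * a) \ ball x a) := setLIntegral_const _ _
    _ ≤ ENNReal.ofReal (a ^ (m + α))⁻¹ * ENNReal.ofReal (C₀ * (2 * a) ^ m) := by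
        gcongr
        exact (measure_mono sdiff_subset).trans hgrowth
    _ = ENNReal.ofReal (C₀ * 2 ^ m * r ^ (-α) * (2 ^ (-α)) ^ j) := by
        rw [← ENNReal.ofReal_mul (by positivity)]
        congr 1
        have hαj : a ^ α = (2 ^ α) ^ j * r ^ α := by
          rw [Real.mul_rpow (by positivity) hr.le, Real.rpow_pow_comm zero_le_two]
        rw [Real.mul_rpow zero_le_two ha.le, Real.rpow_add ha, hαj,
          Real.rpow_neg hr.le, Real.rpow_neg zero_le_two, inv_pow]
        have : a ^ m ≠ 0 := by positivity
        field_simp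

theorem lintegral_compl_ball_inv_dist_rpow_le (μ : Measure X) (x : X) {m α C₀ r : ℝ}
    (hmα : 0 ≤ m + α) (hα : 0 < α) (hC₀ : 0 ≤ C₀) (hr : 0 < r)
    (hgrowth : ∀ ρ, r ≤ ρ → μ (ball x ρ) ≤ ENNReal.ofReal (C₀ * ρ ^ m)) :
    ∫⁻ y in (ball x r)ᶜ, ENNReal.ofReal (dist x y ^ (m + α))⁻¹ ∂μ
      ≤ ENNReal.ofReal (C₀ * 2 ^ m / (1 - 2 ^ (-α)) * r ^ (-α)) := by
  set q : ℝ := 2 ^ (-α)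
  have hq0 : 0 ≤ q := by positivity
  have hq1 : q < 1 := Real.rpow_lt_one_of_one_lt_of_neg one_lt_two (neg_lt_zero.2 hα)
  have hr_le : ∀ j : ℕ, r ≤ 2 ^ (j + 1) * r := fun j =>
    le_mul_of_one_le_left hr.le (one_le_pow₀ one_le_two)
  calc ∫⁻ y in (ball x r)ᶜ, ENNReal.ofReal (dist x y ^ (m + α))⁻¹ ∂μ
      ≤ ∫⁻ y in ⋃ j : ℕ, ball x (2 ^ (j + 1) * r) \ ball x (2 ^ j * r),
          ENNReal.ofReal (dist x y ^ (m + α))⁻¹ ∂μ :=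
        lintegral_mono_set (compl_ball_subset_iUnion_ball_diff_ball x hr)
    _ ≤ ∑' j : ℕ, ∫⁻ y in ball x (2 ^ (j + 1) * r) \ ball x (2 ^ j * r),
          ENNReal.ofReal (dist x y ^ (m + α))⁻¹ ∂μ := lintegral_iUnion_le _ _
    _ ≤ ∑' j : ℕ, ENNReal.ofReal (C₀ * 2 ^ m * r ^ (-α) * q ^ j) :=
        ENNReal.tsum_le_tsum fun j => setLIntegral_ball_diff_ball_inv_dist_rpow_le μ x hmα hr j
          (hgrowth _ (hr_le j))
    _ = ENNReal.ofReal (∑' j : ℕ, C₀ * 2 ^ m * r ^ (-α) * q ^ j) :=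
        (ENNReal.ofReal_tsum_of_nonneg (fun j => by positivity)
          ((summable_geometric_of_lt_one hq0 hq1).mul_left _)).symm
    _ = ENNReal.ofReal (C₀ * 2 ^ m / (1 - q) * r ^ (-α)) := by
        rw [tsum_mul_left, tsum_geometric_of_lt_one hq0 hq1]
        congr 1
        ring

end GrowthTail

theorem SizeCond.norm_le_inv_dist_rpow {n : ℕ} {m α Cs : ℝ} {s : ℝ → Rn n → Rn n → ℂ}
    (hs : SizeCond n m α Cs s) (hCs : 0 ≤ Cs) (hmα : 0 ≤ m + α) {t : ℝ} (ht : 0 < t)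
    {x y : Rn n} (hxy : 0 < dist x y) :
    ‖s t x y‖ ≤ Cs * t ^ α * (dist x y ^ (m + α))⁻¹ := by
  calc ‖s t x y‖ ≤ Cs * t ^ α / (t + dist x y) ^ (m + α) := hs t ht x y
    _ ≤ Cs * t ^ α / dist x y ^ (m + α) := by gcongr; linarith
    _ = Cs * t ^ α * (dist x y ^ (m + α))⁻¹ := div_eq_mul_inv _ _

theorem norm_theta_le_of_eq_zero_on_ball {n : ℕ} {m α Cs : ℝ} {s : ℝ → Rn n → Rn n → ℂ}
    (hs : SizeCond n m α Cs s) (hCs : 0 ≤ Cs) (hmα : 0 ≤ m + α) (σ : Measure (Rn n))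
    {x : Rn n} {r : ℝ} (hr : 0 < r) {g : Rn n → ℂ} (hg_le : ∀ᵐ y ∂σ, ‖g y‖ ≤ 1)
    (hg_zero : ∀ y ∈ ball x r, g y = 0) {t : ℝ} (ht : 0 < t) :
    ‖theta s σ g t x‖ₑ ≤ ENNReal.ofReal (Cs * t ^ α) *
      ∫⁻ y in (ball x r)ᶜ, ENNReal.ofReal (dist x y ^ (m + α))⁻¹ ∂σ := by
  have hpointwise : ∀ᵐ y ∂σ, ‖s t x y * g y‖ₑ ≤
      (ball x r)ᶜ.indicator (fun y => ENNReal.ofReal (Cs * t ^ α) *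
        ENNReal.ofReal (dist x y ^ (m + α))⁻¹) y := by
    filter_upwards [hg_le] with y hy
    by_cases hyB : y ∈ ball x r
    · simp [hg_zero y hyB]
    · have hxy : r ≤ dist x y := by simpa [dist_comm] using hyB
      rw [indicator_of_mem hyB, ← ENNReal.ofReal_mul (by positivity), ← ofReal_norm,
        norm_mul]
      refine ENNReal.ofReal_le_ofReal ?_
      calc ‖s t x y‖ * ‖g y‖ ≤ (Cs * t ^ α * (dist x y ^ (m + α))⁻¹) * 1 := by
            gcongr
            exact hs.norm_le_inv_dist_rpow hCs hmα ht (hr.trans_le hxy)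
        _ = _ := mul_one _
  calc ‖theta s σ g t x‖ₑ ≤ ∫⁻ y, ‖s t x y * g y‖ₑ ∂σ := enorm_integral_le_lintegral_enorm _
    _ ≤ ∫⁻ y, (ball x r)ᶜ.indicator (fun y => ENNReal.ofReal (Cs * t ^ α) *
          ENNReal.ofReal (dist x y ^ (m + α))⁻¹) y ∂σ := lintegral_mono_ae hpointwise
    _ = _ := by
        rw [lintegral_indicator measurableSet_ball.compl,
          lintegral_const_mul' _ _ ENNReal.ofReal_ne_top]

/-- If the kernels satisfy the size condition,
`σ(B(x,ρ)) ≤ C₀ ρ^m` for every `ρ ≥ d/2`, `|g| ≤ 1` σ-a.e. and `g` vanishes on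
`B(x, d/2)`, then `|θ_t^σ g(x)| ≤ C (t/d)^α` for `0 < t ≤ d`, where `C` depends
only on `C₀`, `m`, `α` and the kernel size constant. -/
theorem statement16 (m α Cs C₀ : ℝ) (hm : 0 < m) (hα : 0 < α) (hCs : 0 < Cs)
    (hC₀ : 0 < C₀) :
    ∃ C : ℝ, 0 < C ∧
      ∀ (n : ℕ) (sk : ℝ → Rn n → Rn n → ℂ),
        Measurable (fun p : ℝ × Rn n × Rn n => sk p.1 p.2.1 p.2.2) →
        SizeCond n m α Cs sk →
      ∀ (σ : Measure (Rn n)) (x : Rn n) (d : ℝ), 0 < d →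
        (∀ ρ : ℝ, d / 2 ≤ ρ → σ (Metric.ball x ρ) ≤ ENNReal.ofReal (C₀ * ρ ^ m)) →
      ∀ g : Rn n → ℂ, Measurable g → (∀ᵐ y ∂σ, ‖g y‖ ≤ 1) →
        (∀ y ∈ Metric.ball x (d / 2), g y = 0) →
      ∀ t : ℝ, 0 < t → t ≤ d →
        ‖theta sk σ g t x‖ ≤ C * (t / d) ^ α := by
  have hq : 0 < 1 - (2 : ℝ) ^ (-α) :=
    sub_pos.2 (Real.rpow_lt_one_of_one_lt_of_neg one_lt_two (neg_lt_zero.2 hα))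
  refine ⟨Cs * (C₀ * 2 ^ m / (1 - 2 ^ (-α))) * 2 ^ α, by positivity, ?_⟩
  intro n sk _ hsize σ x d hd hgrowth g _ hg_le hg_zero t ht _
  have hmα : 0 ≤ m + α := by linarith
  have hd2 : 0 < d / 2 := by positivity
  have hθ := (norm_theta_le_of_eq_zero_on_ball hsize hCs.le hmα σ hd2 hg_le hg_zero ht).trans
    (mul_le_mul_right (lintegral_compl_ball_inv_dist_rpow_le σ x hmα hα hC₀.le hd2 hgrowth) _)
  rw [← ofReal_norm, ← ENNReal.ofReal_mul (by positivity),
    ENNReal.ofReal_le_ofReal_iff (by positivity)] at hθ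
  refine hθ.trans_eq ?_
  rw [Real.rpow_neg hd2.le, Real.div_rpow ht.le hd.le, Real.div_rpow hd.le zero_le_two]
  field_simp

end
end

section
/- Fix γ ∈ (0,1) and an integer r ≥ 1. Let Q ⊂ ℝ^n be a cube centered at the origin, N ∈ ℤ with 2^{N−3} ≤ ℓ(Q) < 2^{N−2}, Ω = [−2^{N−1}, 2^{N−1})^n equipped with normalized Lebesgue measure P, Q*(w) = w + [−2^N, 2^N)^n for w ∈ Ω, D(w) the dyadic lattice of Q*(w), and D₀ = D(0). Say R ∈ D₀ is D(w)-bad if there exists P ∈ D(w) with ℓ(P) ≥ 2^r ℓ(R) and d(R, ∂P) ≤ ℓ(R)^γ ℓ(P)^{1−γ}. Then for every R ∈ D₀, P({w ∈ Ω : R is D(w)-bad}) ≤ C(n, γ) 2^{−γ r}. In particular, for every τ > 0 there exists r depending only on n, γ and τ such that this probability is at most τ for every R ∈ D₀. -/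
/-!
A cube `R` of side `ℓ` can only be bad because of a cube `P ∈ D(w)` of side `s = 2^j ℓ` with
`j ≥ r`, and then some face of `P` passes within `2 · 2^{-γj} s` of `R`. In coordinate `i`
the faces of the generation of `P` form the lattice `w_i + sℤ` (up to a fixed shift), and `w_i`
is uniformly distributed on an interval of length `≳ s`, so this happens with probability
`≲ (ℓ + 4 · 2^{-γj} s) / s ≲ 2^{-γj}`. Summing over the `n` coordinates and over `j ≥ r` gives
`C(n, γ) 2^{-γr}`.
-/

open MeasureTheory Metric Set
open scoped ENNReal NNReal

noncomputable section

/-- The set of translations `Ω = [-2^{N-1}, 2^{N-1})ⁿ`. -/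
def gridOmega (n : ℕ) (N : ℤ) : Set (Rn n) :=
  {w | ∀ i, -(2:ℝ) ^ (N - 1) ≤ w i ∧ w i < (2:ℝ) ^ (N - 1)}

/-- The normalized Lebesgue measure on `gridOmega n N`. -/
def gridProb (n : ℕ) (N : ℤ) : Measure (Rn n) :=
  (volume (gridOmega n N))⁻¹ • volume.restrict (gridOmega n N)

/-- The translated cube `Q*(w) = w + [-2^N, 2^N)ⁿ`. -/
def Qstar (n : ℕ) (N : ℤ) (w : Rn n) : Cube n :=
  ⟨w, (2:ℝ) ^ (N + 1), by positivity⟩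

/-- The distance `d(R, ∂P)` from the cube `R` to the boundary of the cube `P`. -/
def bdryDist {n : ℕ} (R P : Cube n) : ℝ :=
  sInf (Set.image2 (fun x y => Dist.dist x y) R.set (frontier P.set))

/-- `R` is `D`-bad (with parameters `γ`, `r`): there is `P ∈ D` with
`ℓ(P) ≥ 2^r ℓ(R)` and `d(R, ∂P) ≤ ℓ(R)^γ ℓ(P)^{1-γ}`. -/
def IsBad {n : ℕ} (γ : ℝ) (r : ℕ) (D : Set (Cube n)) (R : Cube n) : Prop :=
  ∃ P ∈ D, (2:ℝ) ^ r * R.l ≤ P.l ∧ bdryDist R P ≤ R.l ^ γ * P.l ^ (1 - γ)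

namespace Cube

variable {n : ℕ}

lemma set_nonempty (P : Cube n) : P.set.Nonempty :=
  ⟨P.c, fun i => by constructor <;> linarith [P.l_pos]⟩

lemma set_ne_univ (hn : 0 < n) (P : Cube n) : P.set ≠ univ := fun h => by
  have := ((h ▸ mem_univ _ : WithLp.toLp 2 (fun i => P.c i + P.l) ∈ P.set) ⟨0, hn⟩).2
  simp only at this
  linarith [P.l_pos]

lemma frontier_set_nonempty (hn : 0 < n) (P : Cube n) : (frontier P.set).Nonempty :=
  nonempty_frontier_iff.2 ⟨P.set_nonempty, P.set_ne_univ hn⟩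

lemma exists_apply_eq_of_mem_frontier {P : Cube n} {y : Rn n} (hy : y ∈ frontier P.set) :
    ∃ i, y i = P.c i - P.l / 2 ∨ y i = P.c i + P.l / 2 := by
  have hclosed : IsClosed {x : Rn n | ∀ i, x i ∈ Icc (P.c i - P.l / 2) (P.c i + P.l / 2)} := by
    simp only [ofPred_forall]
    exact isClosed_iInter fun i => isClosed_Icc.preimage (PiLp.continuous_apply 2 _ i)
  have hopen : IsOpen {x : Rn n | ∀ i, x i ∈ Ioo (P.c i - P.l / 2) (P.c i + P.l / 2)} := by
    simp only [ofPred_forall]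
    exact isOpen_iInter_of_finite fun i => isOpen_Ioo.preimage (PiLp.continuous_apply 2 _ i)
  have hbox := closure_minimal (fun x hx i => ⟨(hx i).1, (hx i).2.le⟩) hclosed hy.1
  by_contra! h
  exact hy.2 <| interior_maximal (fun x hx i => ⟨(hx i).1.le, (hx i).2⟩) hopen fun i =>
    ⟨(hbox i).1.lt_of_ne (h i).1.symm, (hbox i).2.lt_of_ne (h i).2⟩

end Cube

lemma exists_dist_lt_of_bdryDist_lt {n : ℕ} (hn : 0 < n) {R P : Cube n} {δ : ℝ}
    (h : bdryDist R P < δ) : ∃ x ∈ R.set, ∃ y ∈ frontier P.set, dist x y < δ := by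
  have hne : (image2 (fun x y => dist x y) R.set (frontier P.set)).Nonempty :=
    R.set_nonempty.image2 (P.frontier_set_nonempty hn)
  have hbdd : BddBelow (image2 (fun x y => dist x y) R.set (frontier P.set)) :=
    ⟨0, by rintro _ ⟨x, -, y, -, rfl⟩; exact dist_nonneg⟩
  obtain ⟨_, ⟨x, hx, y, hy, rfl⟩, hxy⟩ := (csInf_lt_iff hbdd hne).1 h
  exact ⟨x, hx, y, hy, hxy⟩

lemma exists_int_eq_of_dyadicCube_face {n : ℕ} (Q₀ : Cube n) (k : ℕ) (j : Fin n → ℕ) (i : Fin n)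
    {y : ℝ} (hy : y = (dyadicCube Q₀ k j).c i - (dyadicCube Q₀ k j).l / 2 ∨
      y = (dyadicCube Q₀ k j).c i + (dyadicCube Q₀ k j).l / 2) :
    ∃ q : ℤ, y = Q₀.c i - Q₀.l / 2 + q * (Q₀.l / 2 ^ k) := by
  rcases hy with rfl | rfl
  · exact ⟨j i, by simp only [dyadicCube, Int.cast_natCast]; ring⟩
  · exact ⟨j i + 1, by push_cast [dyadicCube]; ring⟩

lemma volume_setOf_forall_apply_mem {ι : Type*} [Fintype ι] (t : ι → Set ℝ) :
    volume {w : EuclideanSpace ℝ ι | ∀ i, w i ∈ t i} = ∏ i, volume (t i) := by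
  have : {w : EuclideanSpace ℝ ι | ∀ i, w i ∈ t i}
      = (MeasurableEquiv.toLp 2 (ι → ℝ)).symm ⁻¹' univ.pi t := by
    ext; simp
  rw [this, (EuclideanSpace.volume_preserving_symm_measurableEquiv_toLp ι).measure_preimage_equiv,
    volume_pi_pi]

lemma measurableSet_gridOmega (n : ℕ) (N : ℤ) : MeasurableSet (gridOmega n N) := by
  have : gridOmega n N = (MeasurableEquiv.toLp 2 (Fin n → ℝ)).symm ⁻¹'
      univ.pi fun _ => Ico (-(2:ℝ) ^ (N - 1)) ((2:ℝ) ^ (N - 1)) := by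
    ext; simp [gridOmega]
  rw [this]
  exact (MeasurableEquiv.measurable _) (MeasurableSet.univ_pi fun _ => measurableSet_Ico)

lemma gridProb_setOf_apply_mem {n : ℕ} {N : ℤ} (i : Fin n) (S : Set ℝ) :
    gridProb n N {w | w i ∈ S}
      = volume (S ∩ Ico (-(2:ℝ) ^ (N - 1)) (2 ^ (N - 1)))
        / volume (Ico (-(2:ℝ) ^ (N - 1)) (2 ^ (N - 1))) := by
  classical
  set I := Ico (-(2:ℝ) ^ (N - 1)) (2 ^ (N - 1))
  have hΩ : gridOmega n N = {w : Rn n | ∀ i', w i' ∈ Function.update (fun _ => I) i I i'} := by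
    simp only [Function.update_eq_self]; rfl
  have hS : {w : Rn n | w i ∈ S} ∩ gridOmega n N
      = {w : Rn n | ∀ i', w i' ∈ Function.update (fun _ => I) i (S ∩ I) i'} := by
    ext w
    refine ⟨fun ⟨hwS, hwΩ⟩ i' => ?_, fun h => ⟨?_, fun i' => ?_⟩⟩
    · rcases eq_or_ne i' i with rfl | hi
      · rw [Function.update_self]; exact ⟨hwS, hwΩ i'⟩
      · rw [Function.update_of_ne hi]; exact hwΩ i'
    · have := h i
      rw [Function.update_self] at this
      exact this.1
    · have := h i'
      rcases eq_or_ne i' i with rfl | hi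
      · rw [Function.update_self] at this; exact this.2
      · rwa [Function.update_of_ne hi] at this
  have hprod : ∀ A, ∏ i', volume (Function.update (fun _ => I) i A i')
      = volume A * ∏ i' ∈ Finset.univ.erase i, volume I := fun A => by
    rw [← Finset.mul_prod_erase _ _ (Finset.mem_univ i), Function.update_self]
    exact congrArg _ (Finset.prod_congr rfl fun i' hi' => by
      rw [Function.update_of_ne (Finset.ne_of_mem_erase hi')])
  have hI : volume I ≠ 0 ∧ volume I ≠ ⊤ := by
    rw [Real.volume_Ico]; exact ⟨by simp; positivity, ENNReal.ofReal_ne_top⟩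
  rw [gridProb, Measure.smul_apply, smul_eq_mul,
    Measure.restrict_apply' (measurableSet_gridOmega n N), hS, hΩ, volume_setOf_forall_apply_mem,
    volume_setOf_forall_apply_mem, hprod, hprod,
    ← ENNReal.div_eq_inv_mul, ENNReal.mul_div_mul_right]
  · exact Finset.prod_ne_zero_iff.2 fun _ _ => hI.1
  · exact ENNReal.prod_ne_top fun _ _ => hI.2

def latticeNbhd (s c ρ : ℝ) : Set ℝ := ⋃ q : ℤ, Icc (c + q * s - ρ) (c + q * s + ρ)

/-- Only the `(2a + 2ρ)/s + 1` lattice points within `ρ` of `[-a, a]` contribute. -/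
lemma volume_latticeNbhd_inter_Icc_le {s : ℝ} (hs : 0 < s) (c : ℝ) {ρ a : ℝ} (hρ : 0 ≤ ρ)
    (ha : 0 ≤ a) :
    volume (latticeNbhd s c ρ ∩ Icc (-a) a)
      ≤ ENNReal.ofReal (((2 * a + 2 * ρ) / s + 1) * (2 * ρ)) := by
  set F := Finset.Icc ⌈(-a - ρ - c) / s⌉ ⌊(a + ρ - c) / s⌋
  have hsub : latticeNbhd s c ρ ∩ Icc (-a) a ⊆ ⋃ q ∈ F, Icc (c + q * s - ρ) (c + q * s + ρ) := by
    rintro t ⟨ht, hta⟩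
    obtain ⟨q, hq⟩ := mem_iUnion.1 ht
    refine mem_iUnion₂.2 ⟨q, Finset.mem_Icc.2 ⟨Int.ceil_le.2 ?_, Int.le_floor.2 ?_⟩, hq⟩
    · rw [div_le_iff₀ hs]; linarith [hq.2, hta.1]
    · rw [le_div_iff₀ hs]; linarith [hq.1, hta.2]
  have hcard : (F.card : ℝ) ≤ (2 * a + 2 * ρ) / s + 1 := by
    rw [Int.card_Icc, ← Int.cast_natCast, Int.toNat_eq_max, Int.cast_max, Int.cast_zero]
    refine max_le ?_ (by positivity)
    have := Int.floor_le ((a + ρ - c) / s)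
    have := Int.le_ceil ((-a - ρ - c) / s)
    have : (2 * a + 2 * ρ) / s = (a + ρ - c) / s - (-a - ρ - c) / s := by ring
    push_cast
    linarith
  calc volume (latticeNbhd s c ρ ∩ Icc (-a) a)
      ≤ ∑ q ∈ F, volume (Icc (c + q * s - ρ) (c + q * s + ρ)) :=
        (measure_mono hsub).trans (measure_biUnion_finset_le _ _)
    _ = F.card * ENNReal.ofReal (2 * ρ) := by
        simp only [Real.volume_Icc, add_sub_sub_cancel, ← two_mul, Finset.sum_const, nsmul_eq_mul]
    _ ≤ ENNReal.ofReal (((2 * a + 2 * ρ) / s + 1) * (2 * ρ)) := by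
        refine (mul_le_mul_left ?_ _).trans_eq (ENNReal.ofReal_mul (by positivity)).symm
        exact (ENNReal.ofReal_natCast _).symm.trans_le (ENNReal.ofReal_le_ofReal hcard)

lemma gridProb_apply_mem_latticeNbhd_le {n : ℕ} {N : ℤ} (i : Fin n) (c : ℝ) {s ρ : ℝ}
    (hs : 0 < s) (hsN : s ≤ 2 ^ (N + 1)) (hρ : 0 ≤ ρ) (hρs : 2 * ρ ≤ 5 * s) :
    gridProb n N {w | w i ∈ latticeNbhd s c ρ} ≤ ENNReal.ofReal (26 * ρ / s) := by
  set a : ℝ := 2 ^ (N - 1)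
  have ha : 0 < a := by positivity
  have hsa : s ≤ 4 * a := by
    rw [show N + 1 = N - 1 + 2 by ring, zpow_add₀ two_ne_zero] at hsN
    linarith
  rw [gridProb_setOf_apply_mem, Real.volume_Ico, sub_neg_eq_add, ← two_mul]
  calc volume (latticeNbhd s c ρ ∩ Ico (-a) a) / ENNReal.ofReal (2 * a)
      ≤ ENNReal.ofReal (((2 * a + 2 * ρ) / s + 1) * (2 * ρ)) / ENNReal.ofReal (2 * a) := by
        gcongr
        exact (measure_mono (inter_subset_inter_right _ Ico_subset_Icc_self)).trans
          (volume_latticeNbhd_inter_Icc_le hs c hρ ha.le)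
    _ = ENNReal.ofReal (((2 * a + 2 * ρ) / s + 1) * (2 * ρ) / (2 * a)) :=
        (ENNReal.ofReal_div_of_pos (by positivity)).symm
    _ ≤ ENNReal.ofReal (26 * ρ / s) := by
        refine ENNReal.ofReal_le_ofReal ?_
        rw [div_add_one hs.ne', div_mul_eq_mul_div, div_div, div_le_div_iff₀ (by positivity) hs]
        nlinarith [mul_nonneg hρ hs.le, mul_nonneg hρ ha.le]

lemma div_rpow_mul_rpow_one_sub (γ : ℝ) {s : ℝ} (hs : 0 < s) (j : ℕ) :
    (s / 2 ^ j) ^ γ * s ^ (1 - γ) = ((2:ℝ) ^ (-γ)) ^ j * s := by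
  rw [Real.div_rpow hs.le (by positivity), div_mul_eq_mul_div, ← Real.rpow_add hs,
    add_sub_cancel, Real.rpow_one, ← Real.rpow_natCast, ← Real.rpow_natCast,
    ← Real.rpow_mul zero_le_two, ← Real.rpow_mul zero_le_two, div_eq_mul_inv, mul_comm,
    ← Real.rpow_neg zero_le_two, neg_mul_eq_mul_neg, mul_comm (j : ℝ)]

lemma div_two_pow_eq_div_two_pow_sub_div (L : ℝ) {j k : ℕ} (h : j ≤ k) :
    L / 2 ^ k = L / 2 ^ (k - j) / 2 ^ j := by
  rw [div_div, ← pow_add, Nat.sub_add_cancel h]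

/-- `j` is the gap between the generations of `R` and of the bad cube `P`; the radius is `ℓ(R)/2`
plus twice the threshold `ℓ(R)^γ ℓ(P)^{1-γ} = 2^{-γj} ℓ(P)`. -/
lemma setOf_isBad_subset {n : ℕ} (hn : 0 < n) (γ : ℝ) (r k : ℕ) (N : ℤ) (R : Cube n)
    (hR : R.l = (2:ℝ) ^ (N + 1) / 2 ^ k) :
    {w | IsBad γ r (dyadicLattice (Qstar n N w)) R} ⊆
      ⋃ j ∈ Finset.Ico r (k + 1), ⋃ i, {w | w i ∈ latticeNbhd ((2:ℝ) ^ (N + 1) / 2 ^ (k - j))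
        (R.c i + (2:ℝ) ^ (N + 1) / 2)
        (R.l / 2 + 2 * ((2:ℝ) ^ (-γ)) ^ j * ((2:ℝ) ^ (N + 1) / 2 ^ (k - j)))} := by
  rintro w ⟨_, ⟨m, jP, -, rfl⟩, hPl, hPd⟩
  set L : ℝ := 2 ^ (N + 1)
  have hrm : r + m ≤ k := by
    have : (2:ℝ) ^ (r + m) ≤ 2 ^ k := by
      change 2 ^ r * R.l ≤ L / 2 ^ m at hPl
      rw [hR, mul_div_assoc', div_le_div_iff₀ (by positivity) (by positivity)] at hPl
      rw [pow_add]
      nlinarith [show (0:ℝ) < L by positivity]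
    exact (pow_le_pow_iff_right₀ one_lt_two).1 this
  set j := k - m
  have hkj : k - j = m := by omega
  have hRj : R.l = L / 2 ^ m / 2 ^ j := by
    rw [hR, ← hkj, ← div_two_pow_eq_div_two_pow_sub_div L (Nat.sub_le k m)]
  have hdist : bdryDist R (dyadicCube (Qstar n N w) m jP)
      < 2 * ((2:ℝ) ^ (-γ)) ^ j * (L / 2 ^ m) := by
    refine hPd.trans_lt ?_
    change R.l ^ γ * (L / 2 ^ m) ^ (1 - γ) < _
    rw [hRj, div_rpow_mul_rpow_one_sub γ (by positivity)]
    linarith [show 0 < ((2:ℝ) ^ (-γ)) ^ j * (L / 2 ^ m) by positivity]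
  obtain ⟨x, hx, y, hy, hxy⟩ := exists_dist_lt_of_bdryDist_lt hn hdist
  obtain ⟨i, hi⟩ := Cube.exists_apply_eq_of_mem_frontier hy
  obtain ⟨q, hq⟩ := exists_int_eq_of_dyadicCube_face _ m jP i hi
  have hxy_i := abs_lt.1 <| (Real.dist_eq _ _ ▸ PiLp.dist_apply_le x y i).trans_lt hxy
  refine mem_iUnion₂.2 ⟨j, Finset.mem_Ico.2 ⟨by omega, by omega⟩, mem_iUnion.2 ⟨i, ?_⟩⟩
  refine mem_iUnion.2 ⟨-q, ?_⟩
  change y i = w i - L / 2 + q * (L / 2 ^ m) at hq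
  rw [hkj, Int.cast_neg]
  constructor <;> linarith [hx i]

theorem gridProb_isBad_le {n : ℕ} (hn : 0 < n) {γ : ℝ} (hγ0 : 0 < γ) (hγ1 : γ ≤ 1) (r k : ℕ)
    (N : ℤ) (R : Cube n) (hR : R.l = (2:ℝ) ^ (N + 1) / 2 ^ k) :
    gridProb n N {w ∈ gridOmega n N | IsBad γ r (dyadicLattice (Qstar n N w)) R}
      ≤ ENNReal.ofReal (65 * n / (1 - (2:ℝ) ^ (-γ)) * ((2:ℝ) ^ (-γ)) ^ r) := by
  set x : ℝ := 2 ^ (-γ)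
  set L : ℝ := 2 ^ (N + 1)
  have hx0 : 0 < x := by positivity
  have hx1 : x < 1 := Real.rpow_lt_one_of_one_lt_of_neg one_lt_two (by linarith)
  have hx_half : 1 / 2 ≤ x := by
    rw [one_div, ← Real.rpow_neg_one]
    exact Real.rpow_le_rpow_of_exponent_le one_le_two (by linarith)
  have hterm : ∀ j ∈ Finset.Ico r (k + 1), ∀ i,
      gridProb n N {w | w i ∈ latticeNbhd (L / 2 ^ (k - j)) (R.c i + L / 2)
        (R.l / 2 + 2 * x ^ j * (L / 2 ^ (k - j)))} ≤ ENNReal.ofReal (65 * x ^ j) := by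
    intro j hj i
    set s := L / 2 ^ (k - j)
    have hs : 0 < s := by positivity
    have hRs : R.l = s * (1 / 2) ^ j := by
      rw [hR, div_two_pow_eq_div_two_pow_sub_div L (Nat.lt_succ_iff.1 (Finset.mem_Ico.1 hj).2),
        one_div_pow, mul_one_div]
    have hpow : (1 / 2 : ℝ) ^ j ≤ x ^ j := pow_le_pow_left₀ (by norm_num) hx_half j
    have hxj : x ^ j ≤ 1 := pow_le_one₀ hx0.le hx1.le
    refine (gridProb_apply_mem_latticeNbhd_le i _ hs
      (div_le_self (by positivity) (one_le_pow₀ one_le_two)) (by rw [hRs]; positivity) ?_).trans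
      (ENNReal.ofReal_le_ofReal ?_)
    · rw [hRs]; nlinarith
    · rw [hRs, div_le_iff₀ hs]; nlinarith
  have hgeom : 65 * n * ∑ j ∈ Finset.Ico r (k + 1), x ^ j ≤ 65 * n / (1 - x) * x ^ r := by
    rw [div_mul_eq_mul_div, mul_div_assoc]
    exact mul_le_mul_of_nonneg_left (geom_sum_Ico_le_of_lt_one hx0.le hx1) (by positivity)
  calc gridProb n N {w ∈ gridOmega n N | IsBad γ r (dyadicLattice (Qstar n N w)) R}
      ≤ ∑ j ∈ Finset.Ico r (k + 1), ∑ i, gridProb n N {w | w i ∈ latticeNbhd (L / 2 ^ (k - j))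
          (R.c i + L / 2) (R.l / 2 + 2 * x ^ j * (L / 2 ^ (k - j)))} :=
        (measure_mono fun w hw => setOf_isBad_subset hn γ r k N R hR hw.2).trans <|
          (measure_biUnion_finset_le _ _).trans
            (Finset.sum_le_sum fun j _ => measure_iUnion_fintype_le (gridProb n N) _)
    _ ≤ ∑ j ∈ Finset.Ico r (k + 1), ∑ _i : Fin n, ENNReal.ofReal (65 * x ^ j) := by
        gcongr with j hj i
        exact hterm j hj i
    _ = ENNReal.ofReal (65 * n * ∑ j ∈ Finset.Ico r (k + 1), x ^ j) := by
        rw [Finset.mul_sum, ENNReal.ofReal_sum_of_nonneg fun j _ => by positivity]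
        refine Finset.sum_congr rfl fun j _ => ?_
        rw [Finset.sum_const, Finset.card_univ, Fintype.card_fin, nsmul_eq_mul,
          ← ENNReal.ofReal_natCast, ← ENNReal.ofReal_mul (Nat.cast_nonneg n)]
        ring_nf
    _ ≤ ENNReal.ofReal (65 * n / (1 - x) * x ^ r) := ENNReal.ofReal_le_ofReal hgeom

/-- (Probability of bad cubes, Nazarov–Treil–Volberg.)  Fix
`γ ∈ (0,1)` and `r ≥ 1`.  With the random dyadic grids `D(w) = D(Q*(w))`,
`w ∈ Ω = [-2^{N-1}, 2^{N-1})ⁿ` (normalized Lebesgue measure), for every `R ∈ D₀ = D(0)`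
the probability that `R` is `D(w)`-bad is at most `C(n,γ) 2^{-γ r}`.  In particular,
for every `τ > 0` there is `r = r(n, γ, τ)` making this probability at most `τ` for
every `R ∈ D₀`. -/
theorem statement17 (n : ℕ) (hn : 0 < n) (γ : ℝ) (hγ : γ ∈ Set.Ioo (0 : ℝ) 1) :
    (∃ C : ℝ, 0 < C ∧
      ∀ (r : ℕ), 1 ≤ r →
      ∀ Q : Cube n, Q.c = (0 : Rn n) →
      ∀ N : ℤ, (2:ℝ) ^ (N - 3) ≤ Q.l → Q.l < (2:ℝ) ^ (N - 2) →
      ∀ R ∈ dyadicLattice (Qstar n N 0),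
        gridProb n N
            {w ∈ gridOmega n N | IsBad γ r (dyadicLattice (Qstar n N w)) R}
          ≤ ENNReal.ofReal (C * (2:ℝ) ^ (-(γ * (r : ℝ)))))
    ∧ ∀ τ : ℝ, 0 < τ →
      ∃ r : ℕ, 1 ≤ r ∧
        ∀ Q : Cube n, Q.c = (0 : Rn n) →
        ∀ N : ℤ, (2:ℝ) ^ (N - 3) ≤ Q.l → Q.l < (2:ℝ) ^ (N - 2) →
        ∀ R ∈ dyadicLattice (Qstar n N 0),
          gridProb n N
              {w ∈ gridOmega n N | IsBad γ r (dyadicLattice (Qstar n N w)) R}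
            ≤ ENNReal.ofReal τ := by
  obtain ⟨hγ0, hγ1⟩ := hγ
  set x : ℝ := 2 ^ (-γ)
  have hx1 : x < 1 := Real.rpow_lt_one_of_one_lt_of_neg one_lt_two (by linarith)
  set C : ℝ := 65 * n / (1 - x)
  have hC : 0 < C := div_pos (by positivity) (sub_pos.2 hx1)
  have hbound : ∀ (r : ℕ) (N : ℤ), ∀ R ∈ dyadicLattice (Qstar n N 0),
      gridProb n N {w ∈ gridOmega n N | IsBad γ r (dyadicLattice (Qstar n N w)) R}
        ≤ ENNReal.ofReal (C * x ^ r) := by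
    rintro r N _ ⟨k, j, -, rfl⟩
    exact gridProb_isBad_le hn hγ0 hγ1.le r k N _ rfl
  have hpow : ∀ r : ℕ, (2:ℝ) ^ (-(γ * r)) = x ^ r := fun r => by
    rw [← Real.rpow_natCast, ← Real.rpow_mul zero_le_two, neg_mul]
  refine ⟨⟨C, hC, fun r _ _ _ N _ _ R hR => hpow r ▸ hbound r N R hR⟩, fun τ hτ => ?_⟩
  obtain ⟨r, hr⟩ := exists_pow_lt_of_lt_one (div_pos hτ hC) hx1
  refine ⟨r + 1, le_add_self, fun _ _ N _ _ R hR => (hbound _ N R hR).trans ?_⟩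
  refine ENNReal.ofReal_le_ofReal ((mul_le_mul_of_nonneg_left ?_ hC.le).trans_eq
    (mul_div_cancel₀ τ hC.ne'))
  exact (pow_le_pow_of_le_one (by positivity) hx1.le r.le_succ).trans hr.le
end
end
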